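/- arXiv:1301.0497 — 5 statements merged into one kernel-verified Lean document; each statement's English description precedes it below -/
import Mathlib

section
/- Let p be a prime. In SL₂(ℤ_p) define J = {g : the (2,1) entry of g lies in pℤ_p}, U = {[[1,b],[0,1]] : b ∈ ℤ_p}, L = {diag(a,a⁻¹) : a ∈ ℤ_pˣ}, V = {[[1,0],[c,1]] : c ∈ pℤ_p}. Then J is a subgroup of SL₂(ℤ_p), L normalizes U and V, and the multiplication map U × L × V → J, (u,l,v) ↦ u·l·v, is a bijection (an Iwahori decomposition J = ULV). -/
open Matrix

/-!
Let `I` be an ideal in the Jacobson radical of `R` (for `ℤ_[p]`, `I = (p)` is the maximal ideal).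
If `g ∈ SL₂(R)` has `g₁₀ ∈ I`, then `det g = 1` makes `g₀₀ g₁₁ = 1 + g₀₁ g₁₀` a unit, so the pivot
`d = g₁₁` is a unit, and clearing the off-diagonal entries against it gives
`g = [[1, g₀₁ d⁻¹], [0, 1]] · diag(d⁻¹, d) · [[1, 0], [d⁻¹ g₁₀, 1]]`. Conversely the entries
`(1,1)`, `(1,0)`, `(0,1)` of `[[1, b], [0, 1]] · diag(a, a⁻¹) · [[1, 0], [c, 1]]` are `a⁻¹`,
`a⁻¹ c`, `b a⁻¹`, which recover `(b, a, c)`.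
-/

open scoped MatrixGroups

namespace Matrix.SpecialLinearGroup

variable {R : Type*} [CommRing R]

def unipotentUpper (b : R) : SL(2, R) := ⟨!![1, b; 0, 1], by simp⟩

def unipotentLower (c : R) : SL(2, R) := ⟨!![1, 0; c, 1], by simp⟩

def diagUnit (a : Rˣ) : SL(2, R) := ⟨!![(a : R), 0; 0, ((a⁻¹ : Rˣ) : R)], by simp⟩

@[simp] lemma coe_unipotentUpper (b : R) :
    (unipotentUpper b : Matrix (Fin 2) (Fin 2) R) = !![1, b; 0, 1] := rfl

@[simp] lemma coe_unipotentLower (c : R) :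
    (unipotentLower c : Matrix (Fin 2) (Fin 2) R) = !![1, 0; c, 1] := rfl

@[simp] lemma coe_diagUnit (a : Rˣ) :
    (diagUnit a : Matrix (Fin 2) (Fin 2) R) = !![(a : R), 0; 0, ((a⁻¹ : Rˣ) : R)] := rfl

@[simp] lemma unipotentUpper_zero : unipotentUpper (0 : R) = 1 := by
  ext i j; fin_cases i <;> fin_cases j <;> simp

@[simp] lemma unipotentLower_zero : unipotentLower (0 : R) = 1 := by
  ext i j; fin_cases i <;> fin_cases j <;> simp

@[simp] lemma diagUnit_one : diagUnit (1 : Rˣ) = 1 := by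
  ext i j; fin_cases i <;> fin_cases j <;> simp

lemma unipotentUpper_add (b b' : R) :
    unipotentUpper (b + b') = unipotentUpper b * unipotentUpper b' := by
  ext i j; fin_cases i <;> fin_cases j <;> simp [add_comm]

lemma unipotentLower_add (c c' : R) :
    unipotentLower (c + c') = unipotentLower c * unipotentLower c' := by
  ext i j; fin_cases i <;> fin_cases j <;> simp

lemma diagUnit_mul (a a' : Rˣ) : diagUnit (a * a') = diagUnit a * diagUnit a' := by
  ext i j; fin_cases i <;> fin_cases j <;> simp [mul_comm]

lemma diagUnit_mul_unipotentUpper_mul_inv (a : Rˣ) (b : R) :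
    diagUnit a * unipotentUpper b * (diagUnit a)⁻¹ = unipotentUpper (a * b * a) := by
  ext i j; fin_cases i <;> fin_cases j <;> simp [adjugate_fin_two]

lemma diagUnit_mul_unipotentLower_mul_inv (a : Rˣ) (c : R) :
    diagUnit a * unipotentLower c * (diagUnit a)⁻¹ = unipotentLower (a⁻¹ * c * a⁻¹ : R) := by
  ext i j; fin_cases i <;> fin_cases j <;> simp [adjugate_fin_two]

lemma coe_unipotentUpper_mul_diagUnit_mul_unipotentLower (b c : R) (a : Rˣ) :
    ((unipotentUpper b * diagUnit a * unipotentLower c : SL(2, R)) : Matrix (Fin 2) (Fin 2) R) =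
      !![a + b * ↑a⁻¹ * c, b * ↑a⁻¹; ↑a⁻¹ * c, ↑a⁻¹] := by
  simp

lemma unipotentUpper_mul_diagUnit_mul_unipotentLower_inj {b b' c c' : R} {a a' : Rˣ}
    (h : unipotentUpper b * diagUnit a * unipotentLower c =
      unipotentUpper b' * diagUnit a' * unipotentLower c') :
    b = b' ∧ a = a' ∧ c = c' := by
  have hM := congrArg (fun g : SL(2, R) => (g : Matrix (Fin 2) (Fin 2) R)) h
  simp only [coe_unipotentUpper_mul_diagUnit_mul_unipotentLower] at hM
  obtain rfl : a = a' := inv_injective (Units.ext (by simpa using congrFun (congrFun hM 1) 1))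
  exact ⟨(Units.mul_left_inj a⁻¹).mp (by simpa using congrFun (congrFun hM 0) 1), rfl,
    (Units.mul_right_inj a⁻¹).mp (by simpa using congrFun (congrFun hM 1) 0)⟩

lemma eq_unipotentUpper_mul_diagUnit_mul_unipotentLower (g : SL(2, R)) (d : Rˣ)
    (hd : (g : Matrix (Fin 2) (Fin 2) R) 1 1 = d) :
    g = unipotentUpper ((g : Matrix (Fin 2) (Fin 2) R) 0 1 * ↑d⁻¹) * diagUnit d⁻¹ *
      unipotentLower (↑d⁻¹ * (g : Matrix (Fin 2) (Fin 2) R) 1 0) := by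
  have hdet := g.det_coe
  rw [det_fin_two, hd] at hdet
  refine SpecialLinearGroup.ext _ _ fun i j => ?_
  rw [coe_unipotentUpper_mul_diagUnit_mul_unipotentLower]
  fin_cases i <;> fin_cases j <;> simp [hd]
  linear_combination (↑d⁻¹ : R) * hdet - (g : Matrix (Fin 2) (Fin 2) R) 0 0 * d.mul_inv

lemma inv_unipotentUpper (b : R) : (unipotentUpper b)⁻¹ = unipotentUpper (-b) :=
  inv_eq_of_mul_eq_one_right (by rw [← unipotentUpper_add, add_neg_cancel, unipotentUpper_zero])

lemma inv_unipotentLower (c : R) : (unipotentLower c)⁻¹ = unipotentLower (-c) :=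
  inv_eq_of_mul_eq_one_right (by rw [← unipotentLower_add, add_neg_cancel, unipotentLower_zero])

lemma inv_diagUnit (a : Rˣ) : (diagUnit a)⁻¹ = diagUnit a⁻¹ :=
  inv_eq_of_mul_eq_one_right (by rw [← diagUnit_mul, mul_inv_cancel, diagUnit_one])

variable (R) in
def upperUnipotentSubgroup : Subgroup SL(2, R) where
  carrier := Set.range unipotentUpper
  one_mem' := ⟨0, unipotentUpper_zero⟩
  mul_mem' := by
    rintro _ _ ⟨b, rfl⟩ ⟨b', rfl⟩
    exact ⟨b + b', unipotentUpper_add b b'⟩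
  inv_mem' := by
    rintro _ ⟨b, rfl⟩
    exact ⟨-b, (inv_unipotentUpper b).symm⟩

variable (R) in
def diagonalUnitSubgroup : Subgroup SL(2, R) where
  carrier := Set.range diagUnit
  one_mem' := ⟨1, diagUnit_one⟩
  mul_mem' := by
    rintro _ _ ⟨a, rfl⟩ ⟨a', rfl⟩
    exact ⟨a * a', diagUnit_mul a a'⟩
  inv_mem' := by
    rintro _ ⟨a, rfl⟩
    exact ⟨a⁻¹, (inv_diagUnit a).symm⟩

def lowerUnipotentSubgroup (I : Ideal R) : Subgroup SL(2, R) where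
  carrier := unipotentLower '' I
  one_mem' := ⟨0, I.zero_mem, unipotentLower_zero⟩
  mul_mem' := by
    rintro _ _ ⟨c, hc, rfl⟩ ⟨c', hc', rfl⟩
    exact ⟨c + c', I.add_mem hc hc', unipotentLower_add c c'⟩
  inv_mem' := by
    rintro _ ⟨c, hc, rfl⟩
    exact ⟨-c, I.neg_mem hc, (inv_unipotentLower c).symm⟩

def iwahoriSubgroup (I : Ideal R) : Subgroup SL(2, R) where
  carrier := {g | (g : Matrix (Fin 2) (Fin 2) R) 1 0 ∈ I}
  one_mem' := by simp
  mul_mem' := by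
    intro g h hg hh
    simp only [Set.mem_ofPred_eq, coe_mul, mul_apply, Fin.sum_univ_two]
    exact I.add_mem (I.mul_mem_right _ hg) (I.mul_mem_left _ hh)
  inv_mem' := by
    intro g hg
    simpa [coe_inv, adjugate_fin_two] using hg

lemma mem_upperUnipotentSubgroup_iff {g : SL(2, R)} :
    g ∈ upperUnipotentSubgroup R ↔ ∃ b : R, (g : Matrix (Fin 2) (Fin 2) R) = !![1, b; 0, 1] :=
  exists_congr fun _ => eq_comm.trans Subtype.ext_iff

lemma mem_diagonalUnitSubgroup_iff {g : SL(2, R)} :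
    g ∈ diagonalUnitSubgroup R ↔
      ∃ a : Rˣ, (g : Matrix (Fin 2) (Fin 2) R) = !![(a : R), 0; 0, ((a⁻¹ : Rˣ) : R)] :=
  exists_congr fun _ => eq_comm.trans Subtype.ext_iff

lemma mem_lowerUnipotentSubgroup_iff {I : Ideal R} {g : SL(2, R)} :
    g ∈ lowerUnipotentSubgroup I ↔ ∃ c ∈ I, (g : Matrix (Fin 2) (Fin 2) R) = !![1, 0; c, 1] :=
  exists_congr fun _ => and_congr_right' (eq_comm.trans Subtype.ext_iff)

lemma diagonalUnitSubgroup_le_normalizer_upperUnipotentSubgroup :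
    diagonalUnitSubgroup R ≤ Subgroup.normalizer (upperUnipotentSubgroup R : Set (SL(2, R))) := by
  rw [Subgroup.le_normalizer_iff]
  rintro _ ⟨a, rfl⟩ _ ⟨b, rfl⟩
  exact ⟨_, (diagUnit_mul_unipotentUpper_mul_inv a b).symm⟩

lemma diagonalUnitSubgroup_le_normalizer_lowerUnipotentSubgroup (I : Ideal R) :
    diagonalUnitSubgroup R ≤ Subgroup.normalizer (lowerUnipotentSubgroup I : Set (SL(2, R))) := by
  rw [Subgroup.le_normalizer_iff]
  rintro _ ⟨a, rfl⟩ _ ⟨c, hc, rfl⟩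
  exact ⟨_, I.mul_mem_right _ (I.mul_mem_left _ hc),
    (diagUnit_mul_unipotentLower_mul_inv a c).symm⟩

lemma isUnit_coe_one_one_of_mem_iwahoriSubgroup {I : Ideal R} (hI : I ≤ Ideal.jacobson ⊥)
    {g : SL(2, R)} (hg : g ∈ iwahoriSubgroup I) : IsUnit ((g : Matrix (Fin 2) (Fin 2) R) 1 1) := by
  have hdet := g.det_coe
  rw [det_fin_two] at hdet
  have hunit := Ideal.mem_jacobson_bot.mp (hI hg) ((g : Matrix (Fin 2) (Fin 2) R) 0 1)
  rw [show (g : Matrix (Fin 2) (Fin 2) R) 1 0 * (g : Matrix (Fin 2) (Fin 2) R) 0 1 + 1 =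
    (g : Matrix (Fin 2) (Fin 2) R) 0 0 * (g : Matrix (Fin 2) (Fin 2) R) 1 1 by
      linear_combination -hdet] at hunit
  exact isUnit_of_mul_isUnit_right hunit

theorem bijOn_upper_diagonal_lower_iwahoriSubgroup {I : Ideal R} (hI : I ≤ Ideal.jacobson ⊥) :
    Set.BijOn (fun q : SL(2, R) × SL(2, R) × SL(2, R) => q.1 * q.2.1 * q.2.2)
      ((upperUnipotentSubgroup R : Set (SL(2, R))) ×ˢ (diagonalUnitSubgroup R : Set (SL(2, R))) ×ˢ
        (lowerUnipotentSubgroup I : Set (SL(2, R)))) (iwahoriSubgroup I) := by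
  refine ⟨?_, ?_, ?_⟩
  · rintro ⟨_, _, _⟩ ⟨⟨b, rfl⟩, ⟨a, rfl⟩, ⟨c, hc, rfl⟩⟩
    show ((_ : SL(2, R)) : Matrix (Fin 2) (Fin 2) R) 1 0 ∈ I
    rw [coe_unipotentUpper_mul_diagUnit_mul_unipotentLower]
    simpa using hc
  · rintro ⟨_, _, _⟩ ⟨⟨b, rfl⟩, ⟨a, rfl⟩, ⟨c, -, rfl⟩⟩
      ⟨_, _, _⟩ ⟨⟨b', rfl⟩, ⟨a', rfl⟩, ⟨c', -, rfl⟩⟩ h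
    obtain ⟨rfl, rfl, rfl⟩ := unipotentUpper_mul_diagUnit_mul_unipotentLower_inj h
    rfl
  · intro g hg
    obtain ⟨d, hd⟩ := isUnit_coe_one_one_of_mem_iwahoriSubgroup hI hg
    exact ⟨(_, _, _), ⟨⟨_, rfl⟩, ⟨_, rfl⟩, ⟨_, I.mul_mem_left _ hg, rfl⟩⟩,
      (eq_unipotentUpper_mul_diagUnit_mul_unipotentLower g d hd.symm).symm⟩

end Matrix.SpecialLinearGroup

/-- In `SL₂(ℤ_p)`, the set `J` of matrices whose `(2,1)` entry lies in `pℤ_p` is a subgroup;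
the sets `U` (upper unipotent), `L` (diagonal with unit entries) and `V` (lower unipotent
with `(2,1)` entry in `pℤ_p`) are subgroups; `L` normalizes `U` and `V`; and the
multiplication map `U × L × V → J`, `(u, l, v) ↦ u·l·v`, is a bijection
(the Iwahori decomposition `J = ULV`). -/
theorem sl2_zp_iwahori_decomposition (p : ℕ) [Fact p.Prime] :
    ∃ J U L V : Subgroup (Matrix.SpecialLinearGroup (Fin 2) ℤ_[p]),
      (J : Set (Matrix.SpecialLinearGroup (Fin 2) ℤ_[p])) =
        {g : Matrix.SpecialLinearGroup (Fin 2) ℤ_[p] | ∃ x : ℤ_[p], (↑g : Matrix (Fin 2) (Fin 2) ℤ_[p]) 1 0 = (p : ℤ_[p]) * x} ∧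
      (U : Set (Matrix.SpecialLinearGroup (Fin 2) ℤ_[p])) =
        {g : Matrix.SpecialLinearGroup (Fin 2) ℤ_[p] | ∃ b : ℤ_[p], (↑g : Matrix (Fin 2) (Fin 2) ℤ_[p]) = !![1, b; 0, 1]} ∧
      (L : Set (Matrix.SpecialLinearGroup (Fin 2) ℤ_[p])) =
        {g : Matrix.SpecialLinearGroup (Fin 2) ℤ_[p] | ∃ a : ℤ_[p]ˣ, (↑g : Matrix (Fin 2) (Fin 2) ℤ_[p]) =
          !![(a : ℤ_[p]), 0; 0, ((a⁻¹ : ℤ_[p]ˣ) : ℤ_[p])]} ∧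
      (V : Set (Matrix.SpecialLinearGroup (Fin 2) ℤ_[p])) =
        {g : Matrix.SpecialLinearGroup (Fin 2) ℤ_[p] | ∃ c : ℤ_[p], (∃ x : ℤ_[p], c = (p : ℤ_[p]) * x) ∧
          (↑g : Matrix (Fin 2) (Fin 2) ℤ_[p]) = !![1, 0; c, 1]} ∧
      L ≤ Subgroup.normalizer (U : Set _) ∧ L ≤ Subgroup.normalizer (V : Set _) ∧
      Set.BijOn
        (fun q : Matrix.SpecialLinearGroup (Fin 2) ℤ_[p] ×
            Matrix.SpecialLinearGroup (Fin 2) ℤ_[p] ×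
            Matrix.SpecialLinearGroup (Fin 2) ℤ_[p] => q.1 * q.2.1 * q.2.2)
        ((U : Set _) ×ˢ (L : Set _) ×ˢ (V : Set _)) (J : Set _) := by
  open SpecialLinearGroup in
  have hI : Ideal.span {(p : ℤ_[p])} ≤ Ideal.jacobson ⊥ :=
    PadicInt.maximalIdeal_eq_span_p (p := p) ▸ IsLocalRing.maximalIdeal_le_jacobson ⊥
  refine ⟨iwahoriSubgroup (Ideal.span {(p : ℤ_[p])}), upperUnipotentSubgroup ℤ_[p],
    diagonalUnitSubgroup ℤ_[p], lowerUnipotentSubgroup (Ideal.span {(p : ℤ_[p])}), ?_,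
    Set.ext fun _ => mem_upperUnipotentSubgroup_iff, Set.ext fun _ => mem_diagonalUnitSubgroup_iff, ?_,
    diagonalUnitSubgroup_le_normalizer_upperUnipotentSubgroup,
    diagonalUnitSubgroup_le_normalizer_lowerUnipotentSubgroup _,
    bijOn_upper_diagonal_lower_iwahoriSubgroup hI⟩
  · ext g
    exact Ideal.mem_span_singleton
  · ext g
    simp only [SetLike.mem_coe, mem_lowerUnipotentSubgroup_iff, Ideal.mem_span_singleton]
    rfl
end

section
/- The map Φ from the center Z(ℂ[L]) of the group algebra ℂ[L] to the space of linear maps φ : ℂ[J]e_V → ℂ[J]e_U satisfying φ(a·x·b) = a·φ(x)·b for all a ∈ ℂ[J] and b ∈ ℂ[L], defined by Φ(z) : x ↦ x·e_U·z, is a ℂ-linear isomorphism. -/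
/-!
Reading the Iwahori decomposition backwards, every element of `J` is uniquely `v * l * u` with
`v ∈ V`, `l ∈ L`, `u ∈ U`. Hence the sandwich map `z ↦ e_V z e_U` on `ℂ[L]` is injective (its
coefficient at `l ∈ L` is `|V|⁻¹ |U|⁻¹ z(l)`) and its image is all of `e_V ℂ[J] e_U`.
A bimodule map `φ` is right multiplication by `m = φ(e_V)`, and `m = e_V m e_U` commutes with
`ℂ[L]`. So `m = e_V z e_U` for a unique `z`, which is central by injectivity, and then
`x m = x e_V z e_U = x e_U z` for every `x ∈ ℂ[J] e_V`.
-/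

open scoped BigOperators

set_option maxHeartbeats 1000000
set_option synthInstance.maxHeartbeats 1000000

noncomputable section

namespace Parahoric

variable {G : Type*} [Group G]

/-- An Iwahori decomposition of the subgroup `I` of `G` as `I = W·M·W̄`:
`M` normalizes `W` and `W̄`, and the multiplication map `W × M × W̄ → I` is a bijection. -/
def IwahoriDecomp (I W M Wb : Subgroup G) : Prop :=
  M ≤ Subgroup.normalizer (W : Set G) ∧ M ≤ Subgroup.normalizer (Wb : Set G) ∧
    Set.BijOn (fun q : G × G × G => q.1 * q.2.1 * q.2.2)
      ((W : Set G) ×ˢ (M : Set G) ×ˢ (Wb : Set G)) (I : Set G)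

/-- The averaging idempotent `e_H = |H|⁻¹ ∑_{h ∈ H} h` in the group algebra `ℂ[G]`. -/
def algAvg (H : Subgroup G) [Finite H] : MonoidAlgebra ℂ G :=
  letI : Fintype H := Fintype.ofFinite H
  (Nat.card H : ℂ)⁻¹ • ∑ h : H, MonoidAlgebra.of ℂ G (h : G)

/-- The canonical algebra embedding `ℂ[L] → ℂ[G]` for a subgroup `L ≤ G`. -/
def algMap (L : Subgroup G) : MonoidAlgebra ℂ ↥L →ₐ[ℂ] MonoidAlgebra ℂ G :=
  MonoidAlgebra.mapDomainAlgHom ℂ ℂ L.subtype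

/-- `ℂ[G]·e`, the range of right multiplication by `e` on the group algebra. -/
def ralg (G : Type*) [Group G] (e : MonoidAlgebra ℂ G) : Submodule ℂ (MonoidAlgebra ℂ G) :=
  LinearMap.range (LinearMap.mulRight ℂ e)

section Reps

variable {W W₁ W₂ : Type*} [AddCommGroup W] [Module ℂ W]
  [AddCommGroup W₁] [Module ℂ W₁] [AddCommGroup W₂] [Module ℂ W₂]

/-- A ℂ-submodule is stable under a representation. -/
def Stable (π : Representation ℂ G W) (S : Submodule ℂ W) : Prop :=
  ∀ g : G, ∀ x ∈ S, π g x ∈ S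

/-- Irreducibility of a representation (equivalently, simplicity of the corresponding
`ℂ[G]`-module): the space is nonzero and has no nontrivial invariant subspaces. -/
def IsIrreducible (π : Representation ℂ G W) : Prop :=
  (⊤ : Submodule ℂ W) ≠ ⊥ ∧
    ∀ T : Submodule ℂ W, Stable π T → T = ⊥ ∨ T = ⊤

/-- Irreducibility of an invariant subspace `S` of an ambient representation. -/
def IsIrreducibleSub (π : Representation ℂ G W) (S : Submodule ℂ W) : Prop :=
  S ≠ ⊥ ∧ ∀ T : Submodule ℂ W, T ≤ S → Stable π T → T = ⊥ ∨ T = S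

/-- The space `Hom_G(ρ, τ)` of intertwining operators. -/
def repHom (ρ : Representation ℂ G W₁) (τ : Representation ℂ G W₂) :
    Submodule ℂ (W₁ →ₗ[ℂ] W₂) where
  carrier := {φ | ∀ (g : G) (x : W₁), φ (ρ g x) = τ g (φ x)}
  add_mem' := by
    intro φ ψ hφ hψ g x
    simp [hφ g x, hψ g x]
  zero_mem' := by intro g x; simp
  smul_mem' := by
    intro c φ hφ g x
    simp [hφ g x]

/-- `Hom_G(ρ, τ|_T)` where the target is an invariant subspace `T` of `τ`. -/
def homFullSub (ρ : Representation ℂ G W₁) (τ : Representation ℂ G W₂)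
    (T : Submodule ℂ W₂) : Submodule ℂ (W₁ →ₗ[ℂ] ↥T) where
  carrier := {φ | ∀ (g : G) (x : W₁), (φ (ρ g x) : W₂) = τ g ↑(φ x)}
  add_mem' := by
    intro φ ψ hφ hψ g x
    simp [hφ g x, hψ g x]
  zero_mem' := by intro g x; simp
  smul_mem' := by
    intro c φ hφ g x
    simp [hφ g x]

/-- `Hom_G(ρ|_S, τ)` where the source is an invariant subspace `S` of `ρ`. -/
def homSubFull (ρ : Representation ℂ G W₁) (S : Submodule ℂ W₁)
    (τ : Representation ℂ G W₂) : Submodule ℂ (↥S →ₗ[ℂ] W₂) where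
  carrier := {φ | ∀ (g : G) (x : S) (hx : ρ g ↑x ∈ S), φ ⟨ρ g ↑x, hx⟩ = τ g (φ x)}
  add_mem' := by
    intro φ ψ hφ hψ g x hx
    simp [hφ g x hx, hψ g x hx]
  zero_mem' := by intro g x hx; simp
  smul_mem' := by
    intro c φ hφ g x hx
    simp [hφ g x hx]

/-- `Hom_G(ρ|_S, τ|_T)` between invariant subspaces. -/
def homSubSub (ρ : Representation ℂ G W₁) (S : Submodule ℂ W₁)
    (τ : Representation ℂ G W₂) (T : Submodule ℂ W₂) : Submodule ℂ (↥S →ₗ[ℂ] ↥T) where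
  carrier := {φ | ∀ (g : G) (x : S) (hx : ρ g ↑x ∈ S), (φ ⟨ρ g ↑x, hx⟩ : W₂) = τ g ↑(φ x)}
  add_mem' := by
    intro φ ψ hφ hψ g x hx
    simp [hφ g x hx, hψ g x hx]
  zero_mem' := by intro g x hx; simp
  smul_mem' := by
    intro c φ hφ g x hx
    simp [hφ g x hx]

/-- Isomorphism of representations. -/
def IsoRep (ρ : Representation ℂ G W₁) (τ : Representation ℂ G W₂) : Prop :=
  ∃ e : W₁ ≃ₗ[ℂ] W₂, ∀ (g : G) (x : W₁), e (ρ g x) = τ g (e x)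

/-- Equivariant isomorphism from a representation onto an invariant subspace. -/
def IsoFullSub (ρ : Representation ℂ G W₁) (τ : Representation ℂ G W₂)
    (T : Submodule ℂ W₂) : Prop :=
  ∃ e : W₁ ≃ₗ[ℂ] ↥T, ∀ (g : G) (x : W₁), (e (ρ g x) : W₂) = τ g ↑(e x)

/-- Equivariant isomorphism from an invariant subspace onto a representation. -/
def IsoSubFull (ρ : Representation ℂ G W₁) (S : Submodule ℂ W₁)
    (τ : Representation ℂ G W₂) : Prop :=
  ∃ e : ↥S ≃ₗ[ℂ] W₂, ∀ (g : G) (x : S) (hx : ρ g ↑x ∈ S), e ⟨ρ g ↑x, hx⟩ = τ g (e x)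

/-- Equivariant isomorphism between invariant subspaces. -/
def IsoSubSub (ρ : Representation ℂ G W₁) (S : Submodule ℂ W₁)
    (τ : Representation ℂ G W₂) (T : Submodule ℂ W₂) : Prop :=
  ∃ e : ↥S ≃ₗ[ℂ] ↥T, ∀ (g : G) (x : S) (hx : ρ g ↑x ∈ S),
    (e ⟨ρ g ↑x, hx⟩ : W₂) = τ g ↑(e x)

/-- The operator `π(e_H) = |H|⁻¹ ∑_{h ∈ H} π(h)`. -/
def avgMap (π : Representation ℂ G W) (H : Subgroup G) [Finite H] : W →ₗ[ℂ] W :=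
  letI : Fintype H := Fintype.ofFinite H
  (Nat.card H : ℂ)⁻¹ • ∑ h : H, π (h : G)

/-- The subspace `W^H` of `H`-fixed vectors. -/
def fixedSub (π : Representation ℂ G W) (H : Subgroup G) : Submodule ℂ W where
  carrier := {w | ∀ h ∈ H, π h w = w}
  add_mem' := by
    intro a b ha hb h hh
    simp [ha h hh, hb h hh]
  zero_mem' := by intro h hh; simp
  smul_mem' := by
    intro c a ha h hh
    simp [ha h hh]

/-- Restriction of a representation to a subgroup. -/
def resRep (π : Representation ℂ G W) (L : Subgroup G) : Representation ℂ ↥L W :=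
  π.comp L.subtype

/-- The right-translation representation of `G` on the function space `G → W`. -/
def rtRep (G : Type*) [Group G] (W : Type*) [AddCommGroup W] [Module ℂ W] :
    Representation ℂ G (G → W) where
  toFun g :=
    { toFun := fun f x => f (x * g)
      map_add' := fun _ _ => rfl
      map_smul' := fun _ _ => rfl }
  map_one' := LinearMap.ext fun f => funext fun x => by simp
  map_mul' := fun g₁ g₂ => LinearMap.ext fun f => funext fun x => by
    simp [mul_assoc]

/-- The left-translation representation of `G` on the function space `G → W`. -/
def ltRep (G : Type*) [Group G] (W : Type*) [AddCommGroup W] [Module ℂ W] :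
    Representation ℂ G (G → W) where
  toFun g :=
    { toFun := fun f x => f (g⁻¹ * x)
      map_add' := fun _ _ => rfl
      map_smul' := fun _ _ => rfl }
  map_one' := LinearMap.ext fun f => funext fun x => by simp
  map_mul' := fun g₁ g₂ => LinearMap.ext fun f => funext fun x => by
    simp [mul_assoc]

/-- Left translation by a fixed group element, as a linear operator on `G → W`. -/
def lTrans (W : Type*) [AddCommGroup W] [Module ℂ W] (g : G) : (G → W) →ₗ[ℂ] (G → W) where
  toFun f := fun x => f (g * x)
  map_add' := fun _ _ => rfl
  map_smul' := fun _ _ => rfl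

/-- The averaging operator `I_U : f ↦ (j ↦ |U|⁻¹ ∑_{u ∈ U} f(u·j))` on `G → W`. -/
def avgL (U : Subgroup G) [Finite U] (W : Type*) [AddCommGroup W] [Module ℂ W] :
    (G → W) →ₗ[ℂ] (G → W) :=
  letI : Fintype U := Fintype.ofFinite U
  (Nat.card U : ℂ)⁻¹ • ∑ u : U, lTrans W (u : G)

/-- The module `Ind_{LU}^G (infl_L^{LU} ρ)` of functions `f : G → W` with
`f(u·l·g) = ρ(l)·f(g)` for `u ∈ U`, `l ∈ L`; `G` acts by right translation (`rtRep`).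
This is the standard concrete model of `ℂ[G]·e_U ⊗_{ℂ[L]} ρ`. -/
def indInfl (U L : Subgroup G) {W : Type*} [AddCommGroup W] [Module ℂ W]
    (ρ : Representation ℂ ↥L W) : Submodule ℂ (G → W) where
  carrier := {f | ∀ (u l g : G) (hu : u ∈ U) (hl : l ∈ L),
    f (u * l * g) = ρ ⟨l, hl⟩ (f g)}
  add_mem' := by
    intro f₁ f₂ h₁ h₂ u l g hu hl
    simp [h₁ u l g hu hl, h₂ u l g hu hl]
  zero_mem' := by intro u l g hu hl; simp
  smul_mem' := by
    intro c f hf u l g hu hl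
    simp [hf u l g hu hl]

/-- Parahoric induction `i_{U,V} ρ = ℂ[G]e_V e_U ⊗_{ℂ[L]} ρ`, realized concretely as the
image of the averaging operator `I_U` on `Ind_{LV}^G (infl ρ)`; `G` acts by `rtRep`. -/
def parInd (U L V : Subgroup G) [Finite U] {W : Type*} [AddCommGroup W] [Module ℂ W]
    (ρ : Representation ℂ ↥L W) : Submodule ℂ (G → W) :=
  (indInfl V L ρ).map (avgL U W)

/-- Parahoric restriction `r_{U,V} π`: the image of the operator `π(e_U)·π(e_V)`. -/
def parRes (π : Representation ℂ G W) (U V : Subgroup G) [Finite U] [Finite V] :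
    Submodule ℂ W :=
  LinearMap.range (avgMap π U ∘ₗ avgMap π V)

/-- Conjugation `l ↦ w·l·w⁻¹` as an endomorphism of a subgroup `L` normalized by `w`. -/
def conjHom (L : Subgroup G) (w : G) (hw : ∀ l ∈ L, w * l * w⁻¹ ∈ L) : ↥L →* ↥L where
  toFun l := ⟨w * ↑l * w⁻¹, hw ↑l l.2⟩
  map_one' := by ext; simp
  map_mul' := fun a b => by ext; simp [mul_assoc]

/-- External direct sum of two representations of the same group. -/
def pairRep (ρ : Representation ℂ G W₁) (τ : Representation ℂ G W₂) :
    Representation ℂ G (W₁ × W₂) where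
  toFun g := (ρ g).prodMap (τ g)
  map_one' := by ext x <;> simp
  map_mul' := fun g₁ g₂ => by ext x <;> simp

/-- The induced module `ℂ[G] ⊗_{ℂ[J]} W` (for `J ≤ G` of finite index this is all of the
induced module; in general, its "compactly induced" variant is `cInd`): functions
`f : G → W` with `f(g·j) = π(j)⁻¹ f(g)`, the action of `G` being left translation. -/
def indUp (J : Subgroup G) {W : Type*} [AddCommGroup W] [Module ℂ W]
    (π : Representation ℂ ↥J W) : Submodule ℂ (G → W) where
  carrier := {f | ∀ (g : G) (j : ↥J), f (g * ↑j) = π j⁻¹ (f g)}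
  add_mem' := by
    intro f₁ f₂ h₁ h₂ g j
    simp [h₁ g j, h₂ g j]
  zero_mem' := by intro g j; simp
  smul_mem' := by
    intro c f hf g j
    simp [hf g j]

/-- The induced module `ℂ[G] ⊗_{ℂ[J]} W` for an arbitrary subgroup `J` of a (possibly
infinite) group `G`: functions `f : G → W` with `f(g·j) = π(j)⁻¹ f(g)` supported on
finitely many cosets `g·J`; the action of `G` is left translation (`ltRep`). -/
def cInd (J : Subgroup G) {W : Type*} [AddCommGroup W] [Module ℂ W]
    (π : Representation ℂ ↥J W) : Submodule ℂ (G → W) where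
  carrier := {f | (∀ (g : G) (j : ↥J), f (g * ↑j) = π j⁻¹ (f g)) ∧
    ∃ S : Set G, S.Finite ∧ ∀ g : G, f g ≠ 0 → ∃ s ∈ S, ∃ j : ↥J, g = s * ↑j}
  add_mem' := by
    rintro f₁ f₂ ⟨h₁, S₁, hS₁, hS₁'⟩ ⟨h₂, S₂, hS₂, hS₂'⟩
    refine ⟨fun g j => by simp [h₁ g j, h₂ g j], S₁ ∪ S₂, hS₁.union hS₂, fun g hg => ?_⟩
    by_cases hf₁ : f₁ g = 0
    · have hf₂ : f₂ g ≠ 0 := by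
        intro h
        exact hg (by simp [Pi.add_apply, hf₁, h])
      obtain ⟨s, hs, j, hj⟩ := hS₂' g hf₂
      exact ⟨s, Set.mem_union_right _ hs, j, hj⟩
    · obtain ⟨s, hs, j, hj⟩ := hS₁' g hf₁
      exact ⟨s, Set.mem_union_left _ hs, j, hj⟩
  zero_mem' := by
    refine ⟨fun g j => by simp, ∅, Set.finite_empty, fun g hg => absurd rfl hg⟩
  smul_mem' := by
    rintro c f ⟨h, S, hS, hS'⟩
    refine ⟨fun g j => by simp [h g j], S, hS, fun g hg => ?_⟩
    apply hS'
    intro h0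
    exact hg (by simp [Pi.smul_apply, h0])

/-- The space of functions `f : J → ℂ` with `f(b·g) = χ(b)·f(g)`: the concrete model of the
induced representation `Ind_B^J χ` of a one-dimensional character, `J` acting by `rtRep`. -/
def indChar {J : Type*} [Group J] (B : Subgroup J) (χ : ↥B →* ℂˣ) :
    Submodule ℂ (J → ℂ) where
  carrier := {f | ∀ (b : ↥B) (g : J), f (↑b * g) = (χ b : ℂ) * f g}
  add_mem' := by
    intro f₁ f₂ h₁ h₂ b g
    simp [h₁ b g, h₂ b g, mul_add]
  zero_mem' := by intro b g; simp
  smul_mem' := by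
    intro c f hf b g
    simp [hf b g]
    ring

/-- The space `Hom_{J ∩ t⁻¹Jt}(π, π^t)` of linear maps `φ` with
`φ ∘ π(x) = π(t·x·t⁻¹) ∘ φ` for all `x ∈ J ∩ t⁻¹Jt`. -/
def twistedIntertwiners {W : Type*} [AddCommGroup W] [Module ℂ W]
    (J : Subgroup G) (π : Representation ℂ ↥J W) (t : G) :
    Submodule ℂ (W →ₗ[ℂ] W) where
  carrier := {φ | ∀ (x : G) (hx : x ∈ J) (hx' : t * x * t⁻¹ ∈ J),
    φ ∘ₗ π ⟨x, hx⟩ = π ⟨t * x * t⁻¹, hx'⟩ ∘ₗ φ}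
  add_mem' := by
    intro φ ψ hφ hψ x hx hx'
    simp only [LinearMap.add_comp, LinearMap.comp_add, hφ x hx hx', hψ x hx hx']
  zero_mem' := by intro x hx hx'; simp
  smul_mem' := by
    intro c φ hφ x hx hx'
    simp only [LinearMap.smul_comp, LinearMap.comp_smul, hφ x hx hx']

/-- The dimension `dim_ℂ S` of a subspace `S` (e.g. of a space of intertwining maps). -/
def dimC {M : Type*} [AddCommGroup M] [Module ℂ M] (S : Submodule ℂ M) : ℕ :=
  Module.finrank ℂ ↥S

/-- Finite-dimensionality of a subspace over `ℂ`. -/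
def IsFinDimSub {M : Type*} [AddCommGroup M] [Module ℂ M] (S : Submodule ℂ M) : Prop :=
  FiniteDimensional ℂ ↥S

end Reps

section GroupAlgebra

open MonoidAlgebra

theorem algAvg_eq_sum (H : Subgroup G) [Fintype H] :
    algAvg H = (Nat.card H : ℂ)⁻¹ • ∑ h : H, of ℂ G (h : G) := by
  rw [algAvg, Subsingleton.elim (Fintype.ofFinite H) ‹_›]

theorem of_mul_algAvg (H : Subgroup G) [Finite H] {g : G} (hg : g ∈ H) :
    of ℂ G g * algAvg H = algAvg H := by
  cases nonempty_fintype H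
  rw [algAvg_eq_sum, mul_smul_comm, Finset.mul_sum]
  congr 1
  exact Fintype.sum_equiv (Equiv.mulLeft ⟨g, hg⟩) _ _ fun h => (map_mul _ _ _).symm

theorem algAvg_mul_of (H : Subgroup G) [Finite H] {g : G} (hg : g ∈ H) :
    algAvg H * of ℂ G g = algAvg H := by
  cases nonempty_fintype H
  rw [algAvg_eq_sum, smul_mul_assoc, Finset.sum_mul]
  congr 1
  exact Fintype.sum_equiv (Equiv.mulRight ⟨g, hg⟩) _ _ fun h => (map_mul _ _ _).symm

theorem isIdempotentElem_algAvg (H : Subgroup G) [Finite H] : IsIdempotentElem (algAvg H) := by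
  cases nonempty_fintype H
  unfold IsIdempotentElem
  nth_rw 1 [algAvg_eq_sum]
  rw [smul_mul_assoc, Finset.sum_mul, Finset.sum_congr rfl fun h _ => of_mul_algAvg H h.2,
    Finset.sum_const, Finset.card_univ, ← Nat.card_eq_fintype_card, ← Nat.cast_smul_eq_nsmul ℂ,
    smul_smul, inv_mul_cancel₀ (Nat.cast_ne_zero.mpr Nat.card_pos.ne'), one_smul]

theorem commute_of_algAvg_of_mem_normalizer (H : Subgroup G) [Finite H] {g : G}
    (hg : g ∈ Subgroup.normalizer (H : Set G)) : Commute (of ℂ G g) (algAvg H) := by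
  cases nonempty_fintype H
  let conj : H ≃ H := (MulAut.conj g).toEquiv.subtypeEquiv (Subgroup.mem_normalizer_iff.mp hg)
  rw [Commute, SemiconjBy, algAvg_eq_sum, mul_smul_comm, smul_mul_assoc, Finset.mul_sum,
    Finset.sum_mul]
  congr 1
  exact Fintype.sum_equiv conj _ _ fun h => by simp [conj]

theorem algMap_single (L : Subgroup G) (l : L) (c : ℂ) :
    algMap L (single l c) = single (l : G) c :=
  mapDomain_single

theorem coeff_algMap_coe (L : Subgroup G) (z : MonoidAlgebra ℂ L) (l : L) :
    (algMap L z).coeff l = z.coeff l :=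
  Finsupp.mapDomain_apply L.subtype_injective _ _

theorem coeff_algMap_of_notMem (L : Subgroup G) (z : MonoidAlgebra ℂ L) {g : G} (hg : g ∉ L) :
    (algMap L z).coeff g = 0 :=
  Finsupp.mapDomain_of_notMem_range _ _ fun ⟨l, hl⟩ => hg (hl ▸ l.2)

theorem commute_algMap_algAvg (H L : Subgroup G) [Finite H]
    (hLH : L ≤ Subgroup.normalizer (H : Set G)) (b : MonoidAlgebra ℂ L) :
    Commute (algMap L b) (algAvg H) := by
  induction b using MonoidAlgebra.induction_linear with
  | zero => simp
  | add b b' hb hb' => rw [map_add]; exact hb.add_left hb'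
  | single l c =>
    rw [algMap_single, ← mul_one c, ← smul_eq_mul, ← smul_single, ← of_apply]
    exact (commute_of_algAvg_of_mem_normalizer H (hLH l.2)).smul_left c

theorem mem_ralg_iff {e : MonoidAlgebra ℂ G} (he : IsIdempotentElem e) {x : MonoidAlgebra ℂ G} :
    x ∈ ralg G e ↔ x * e = x :=
  ⟨by rintro ⟨y, rfl⟩; exact (mul_assoc y e e).trans (congrArg _ he), fun hx => ⟨x, hx⟩⟩

theorem mul_mul_mem_ralg_of_commute {e b : MonoidAlgebra ℂ G} (x : MonoidAlgebra ℂ G)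
    (h : Commute b e) : x * e * b ∈ ralg G e :=
  ⟨x * b, by simp only [LinearMap.mulRight_apply, mul_assoc, h.eq]⟩

def algAvgRalg (H : Subgroup G) [Finite H] : ralg G (algAvg H) :=
  ⟨algAvg H, (mem_ralg_iff (isIdempotentElem_algAvg H)).mpr (isIdempotentElem_algAvg H)⟩

@[simp]
theorem coe_algAvgRalg (H : Subgroup G) [Finite H] :
    (algAvgRalg H : MonoidAlgebra ℂ G) = algAvg H :=
  rfl

end GroupAlgebra

section Iwahori

open MonoidAlgebra

def mul₃ (q : G × G × G) : G := q.1 * q.2.1 * q.2.2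

theorem IwahoriDecomp.symm {I W M Wb : Subgroup G} (h : IwahoriDecomp I W M Wb) :
    IwahoriDecomp I Wb M W := by
  obtain ⟨hW, hWb, hmaps, hinj, hsurj⟩ := h
  have rev_mem {A B C : Subgroup G} {q : G × G × G}
      (hq : q ∈ (A : Set G) ×ˢ (B : Set G) ×ˢ (C : Set G)) :
      (q.2.2⁻¹, q.2.1⁻¹, q.1⁻¹) ∈ (C : Set G) ×ˢ (B : Set G) ×ˢ (A : Set G) :=
    ⟨inv_mem hq.2.2, inv_mem hq.2.1, inv_mem hq.1⟩
  refine ⟨hWb, hW, fun q hq => ?_, fun q hq q' hq' hqq' => ?_, fun g hg => ?_⟩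
  · simpa [mul_assoc] using inv_mem (hmaps (rev_mem hq))
  · have := hinj (rev_mem hq) (rev_mem hq') (by simpa [mul_assoc] using congrArg (·⁻¹) hqq')
    simp only [Prod.mk.injEq, inv_inj] at this
    exact Prod.ext this.2.2 (Prod.ext this.2.1 this.1)
  · obtain ⟨q, hq, hqg⟩ := hsurj (inv_mem hg)
    exact ⟨_, rev_mem hq, by simpa [mul_assoc] using congrArg (·⁻¹) hqg⟩

variable {U L V : Subgroup G}

theorem coeff_of_mul_algMap_mul_of_eq_zero (hinj : Set.InjOn mul₃ ((V : Set G) ×ˢ L ×ˢ U))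
    {v u : G} (hv : v ∈ V) (hu : u ∈ U) (hvu : v ≠ 1 ∨ u ≠ 1) (z : MonoidAlgebra ℂ L)
    (l : L) :
    (of ℂ G v * algMap L z * of ℂ G u).coeff l = 0 := by
  rw [of_apply, of_apply, coeff_mul_single_apply, coeff_single_mul_apply,
    coeff_algMap_of_notMem, mul_zero, zero_mul]
  -- otherwise `l = v * (v⁻¹ * (l * u⁻¹)) * u` is a second factorisation of `l`
  intro hL
  have := @hinj (v, _, u) ⟨hv, hL, hu⟩ (1, l, 1) ⟨one_mem V, l.2, one_mem U⟩
    (by simp [mul₃, mul_assoc])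
  simp only [Prod.mk.injEq] at this
  exact hvu.elim (· this.1) (· this.2.2)

theorem coeff_algAvg_mul_algMap_mul_algAvg [Finite U] [Finite V]
    (hinj : Set.InjOn mul₃ ((V : Set G) ×ˢ L ×ˢ U)) (z : MonoidAlgebra ℂ L) (l : L) :
    (algAvg V * algMap L z * algAvg U).coeff l =
      ((Nat.card V : ℂ)⁻¹ * (Nat.card U : ℂ)⁻¹) * z.coeff l := by
  cases nonempty_fintype U
  cases nonempty_fintype V
  have expand : algAvg V * algMap L z * algAvg U =
      ((Nat.card V : ℂ)⁻¹ * (Nat.card U : ℂ)⁻¹) •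
        ∑ v : V, ∑ u : U, of ℂ G v * algMap L z * of ℂ G u := by
    simp only [algAvg_eq_sum, smul_mul_assoc, mul_smul_comm, Finset.sum_mul, Finset.mul_sum,
      ← Finset.smul_sum, smul_smul]
    rw [Finset.sum_comm, mul_comm]
  simp only [expand, coeff_smul_apply, smul_eq_mul, coeff_sum, Finsupp.finsetSum_apply]
  rw [Fintype.sum_eq_single 1, Fintype.sum_eq_single 1]
  · simp [coeff_algMap_coe]
  · exact fun u hu => coeff_of_mul_algMap_mul_of_eq_zero hinj (one_mem V) u.2
      (Or.inr (by exact_mod_cast hu)) z l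
  · exact fun v hv => Finset.sum_eq_zero fun u _ =>
      coeff_of_mul_algMap_mul_of_eq_zero hinj v.2 u.2 (Or.inl (by exact_mod_cast hv)) z l

theorem algAvg_mul_algMap_mul_algAvg_injective [Finite U] [Finite V]
    (hinj : Set.InjOn mul₃ ((V : Set G) ×ˢ L ×ˢ U)) :
    Function.Injective fun z : MonoidAlgebra ℂ L => algAvg V * algMap L z * algAvg U := by
  intro z z' h
  ext l
  have hc : (Nat.card V : ℂ)⁻¹ * (Nat.card U : ℂ)⁻¹ ≠ 0 := by simp [Nat.card_pos.ne']
  refine mul_left_cancel₀ hc ?_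
  rw [← coeff_algAvg_mul_algMap_mul_algAvg hinj, ← coeff_algAvg_mul_algMap_mul_algAvg hinj]
  exact congrArg (fun x => x.coeff l) h

theorem exists_algAvg_mul_algMap_mul_algAvg_eq [Finite U] [Finite V]
    (hsurj : Set.SurjOn mul₃ ((V : Set G) ×ˢ L ×ˢ U) Set.univ) (x : MonoidAlgebra ℂ G) :
    ∃ z : MonoidAlgebra ℂ L, algAvg V * algMap L z * algAvg U = algAvg V * x * algAvg U := by
  induction x using MonoidAlgebra.induction_linear with
  | zero => exact ⟨0, by simp⟩
  | add x x' hx hx' =>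
    obtain ⟨z, hz⟩ := hx
    obtain ⟨z', hz'⟩ := hx'
    exact ⟨z + z', by simp only [map_add, mul_add, add_mul, hz, hz']⟩
  | single g c =>
    obtain ⟨⟨v, l, u⟩, ⟨hv, hl, hu⟩, rfl⟩ := hsurj (Set.mem_univ g)
    refine ⟨single ⟨l, hl⟩ c, ?_⟩
    have hsplit : single (mul₃ (v, l, u)) c = of ℂ G v * single l c * of ℂ G u := by
      simp [mul₃, of_apply, single_mul_single]
    rw [algMap_single, hsplit]
    simp only [mul_assoc, of_mul_algAvg U hu]
    rw [← mul_assoc (algAvg V) (of ℂ G v), algAvg_mul_of V (g := v) hv]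

theorem mem_center_of_forall_commute [Finite U] [Finite V]
    (hLU : L ≤ Subgroup.normalizer (U : Set G)) (hLV : L ≤ Subgroup.normalizer (V : Set G))
    (hinj : Set.InjOn mul₃ ((V : Set G) ×ˢ L ×ˢ U)) {z : MonoidAlgebra ℂ L}
    (h : ∀ b, Commute (algMap L b) (algAvg V * algMap L z * algAvg U)) :
    z ∈ Subalgebra.center ℂ (MonoidAlgebra ℂ L) := by
  refine Subalgebra.mem_center_iff.mpr fun b => algAvg_mul_algMap_mul_algAvg_injective hinj ?_
  calc algAvg V * algMap L (b * z) * algAvg U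
      = algMap L b * (algAvg V * algMap L z * algAvg U) := by
        simp only [map_mul, ← mul_assoc, (commute_algMap_algAvg V L hLV b).eq]
    _ = algAvg V * algMap L z * algAvg U * algMap L b := (h b).eq
    _ = algAvg V * algMap L (z * b) * algAvg U := by
        simp only [map_mul, mul_assoc, (commute_algMap_algAvg U L hLU b).eq]

end Iwahori

section Statement2

variable {J : Type*} [Group J] [Fintype J]

/-- The space of linear maps `φ : ℂ[J]e_V → ℂ[J]e_U` satisfying `φ(a·x·b) = a·φ(x)·b`
for all `a ∈ ℂ[J]` and `b ∈ ℂ[L]`. -/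
def bimodHoms (U L V : Subgroup J) :
    Submodule ℂ (↥(ralg J (algAvg V)) →ₗ[ℂ] ↥(ralg J (algAvg U))) where
  carrier := {φ | ∀ (a : MonoidAlgebra ℂ J) (b : MonoidAlgebra ℂ ↥L)
    (x : ↥(ralg J (algAvg V))) (h : a * (x : MonoidAlgebra ℂ J) * algMap L b ∈ ralg J (algAvg V)),
    (↑(φ ⟨a * (x : MonoidAlgebra ℂ J) * algMap L b, h⟩) : MonoidAlgebra ℂ J) = a * ↑(φ x) * algMap L b}
  add_mem' := by
    intro φ ψ hφ hψ a b x h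
    simp [hφ a b x h, hψ a b x h, mul_add, add_mul]
  zero_mem' := by intro a b x h; simp
  smul_mem' := by
    intro c φ hφ a b x h
    simp [hφ a b x h, mul_smul_comm, smul_mul_assoc]

section BimodHoms

variable {U L V : Subgroup J}

def centerToBimodHoms (hLU : L ≤ Subgroup.normalizer (U : Set J)) :
    Subalgebra.center ℂ (MonoidAlgebra ℂ L) →ₗ[ℂ] bimodHoms U L V where
  toFun z :=
    ⟨(LinearMap.mulRight ℂ (algMap L z) ∘ₗ LinearMap.mulRight ℂ (algAvg U)).restrict
        fun x _ => mul_mul_mem_ralg_of_commute x (commute_algMap_algAvg U L hLU z),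
      fun a b x _ => by
        have hb : algMap L b * (algAvg U * algMap L z) =
            algAvg U * (algMap L z * algMap L b) := by
          rw [← mul_assoc, (commute_algMap_algAvg U L hLU b).eq, mul_assoc, ← map_mul,
            ← map_mul, Subalgebra.mem_center_iff.mp z.2 b]
        show a * x * algMap L b * algAvg U * algMap L z =
          a * (x * algAvg U * algMap L z) * algMap L b
        simp only [mul_assoc, hb]⟩
  map_add' z z' := by
    ext x : 3
    exact (congrArg _ (map_add _ _ _)).trans (mul_add _ _ _)
  map_smul' c z := by
    ext x : 3
    exact (congrArg _ (map_smul _ _ _)).trans (mul_smul_comm _ _ _)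

variable {φ : ralg J (algAvg V) →ₗ[ℂ] ralg J (algAvg U)}

theorem bimodHoms_apply_eq (hφ : φ ∈ bimodHoms U L V) {x y : ralg J (algAvg V)}
    (a : MonoidAlgebra ℂ J) (b : MonoidAlgebra ℂ L)
    (h : (y : MonoidAlgebra ℂ J) = a * x * algMap L b) :
    (φ y : MonoidAlgebra ℂ J) = a * φ x * algMap L b := by
  obtain ⟨y, hy⟩ := y
  subst h
  exact hφ a b x hy

theorem bimodHoms_apply_eq_mul (hφ : φ ∈ bimodHoms U L V) (x : ralg J (algAvg V)) :
    (φ x : MonoidAlgebra ℂ J) = x * φ (algAvgRalg V) := by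
  simpa using bimodHoms_apply_eq hφ (x := algAvgRalg V) x 1
    (by simp [(mem_ralg_iff (isIdempotentElem_algAvg V)).mp x.2])

theorem commute_algMap_bimodHoms_apply (hLV : L ≤ Subgroup.normalizer (V : Set J))
    (hφ : φ ∈ bimodHoms U L V) (b : MonoidAlgebra ℂ L) :
    Commute (algMap L b) (φ (algAvgRalg V)) := by
  let y : ralg J (algAvg V) := ⟨algMap L b * algAvg V, algMap L b, rfl⟩
  have h₁ := bimodHoms_apply_eq hφ (x := algAvgRalg V) (y := y) (algMap L b) 1 (by simp [y])
  have h₂ := bimodHoms_apply_eq hφ (x := algAvgRalg V) (y := y) 1 b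
    (by simp [y, (commute_algMap_algAvg V L hLV b).eq])
  simp only [map_one, mul_one, one_mul] at h₁ h₂
  exact h₁.symm.trans h₂

theorem centerToBimodHoms_injective (hLU : L ≤ Subgroup.normalizer (U : Set J))
    (hinj : Set.InjOn mul₃ ((V : Set J) ×ˢ L ×ˢ U)) :
    Function.Injective (centerToBimodHoms (V := V) hLU) := by
  have apply_algAvgRalg (z : Subalgebra.center ℂ (MonoidAlgebra ℂ L)) :
      ((centerToBimodHoms hLU z).1 (algAvgRalg V) : MonoidAlgebra ℂ J) =
        algAvg V * algMap L z * algAvg U := by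
    show algAvg V * algAvg U * algMap L z = _
    rw [mul_assoc, ← (commute_algMap_algAvg U L hLU z).eq, mul_assoc]
  intro z z' h
  exact Subtype.ext <| algAvg_mul_algMap_mul_algAvg_injective hinj <| by
    simp only [← apply_algAvgRalg, h]

theorem centerToBimodHoms_surjective (hLU : L ≤ Subgroup.normalizer (U : Set J))
    (hLV : L ≤ Subgroup.normalizer (V : Set J))
    (hinj : Set.InjOn mul₃ ((V : Set J) ×ˢ L ×ˢ U))
    (hsurj : Set.SurjOn mul₃ ((V : Set J) ×ˢ L ×ˢ U) Set.univ) :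
    Function.Surjective (centerToBimodHoms (V := V) hLU) := by
  rintro ⟨φ, hφ⟩
  have hVm : algAvg V * (φ (algAvgRalg V) : MonoidAlgebra ℂ J) = φ (algAvgRalg V) :=
    (bimodHoms_apply_eq_mul hφ (algAvgRalg V)).symm
  have hmU := (mem_ralg_iff (isIdempotentElem_algAvg U)).mp (φ (algAvgRalg V)).2
  have hcomm := commute_algMap_bimodHoms_apply hLV hφ
  have happly := bimodHoms_apply_eq_mul hφ
  generalize (φ (algAvgRalg V) : MonoidAlgebra ℂ J) = m at hVm hmU hcomm happly
  obtain ⟨z, hz⟩ := exists_algAvg_mul_algMap_mul_algAvg_eq hsurj m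
  rw [hVm, hmU] at hz
  have hzc : z ∈ Subalgebra.center ℂ (MonoidAlgebra ℂ L) :=
    mem_center_of_forall_commute hLU hLV hinj fun b => hz ▸ hcomm b
  refine ⟨⟨z, hzc⟩, Subtype.ext <| LinearMap.ext fun x => Subtype.ext ?_⟩
  calc (x : MonoidAlgebra ℂ J) * algAvg U * algMap L z
      = x * algAvg V * algMap L z * algAvg U := by
        rw [(mem_ralg_iff (isIdempotentElem_algAvg V)).mp x.2, mul_assoc, mul_assoc,
          (commute_algMap_algAvg U L hLU z).eq]
    _ = φ x := by rw [happly, ← hz]; simp only [mul_assoc]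

end BimodHoms

/-- Let `J = ULV` be a finite group with an Iwahori decomposition.  The map
`Φ : Z(ℂ[L]) → Hom_{ℂ[J],ℂ[L]}(ℂ[J]e_V, ℂ[J]e_U)`, `Φ(z) : x ↦ x·e_U·z`, is a
ℂ-linear isomorphism. -/
theorem center_linearEquiv_bimodHoms (U L V : Subgroup J)
    (hIw : IwahoriDecomp (⊤ : Subgroup J) U L V) :
    ∃ Φ : ↥(Subalgebra.center ℂ (MonoidAlgebra ℂ ↥L)) ≃ₗ[ℂ] ↥(bimodHoms U L V),
      ∀ (z : ↥(Subalgebra.center ℂ (MonoidAlgebra ℂ ↥L))) (x : ↥(ralg J (algAvg V))),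
        ((↑(Φ z) : ↥(ralg J (algAvg V)) →ₗ[ℂ] ↥(ralg J (algAvg U))) x : MonoidAlgebra ℂ J)
          = ↑x * algAvg U * algMap L ↑z := by
  obtain ⟨hLV, hLU, hbij⟩ := hIw.symm
  exact ⟨.ofBijective (centerToBimodHoms hLU) ⟨centerToBimodHoms_injective hLU hbij.injOn,
    centerToBimodHoms_surjective hLU hLV hbij.injOn hbij.surjOn⟩, fun _ _ => rfl⟩

end Statement2

end Parahoric
end
end

section
/- Let ρ be an irreducible ℂ[L]-module. Then the ℂ[J]-module i_{U,V}ρ is irreducible; it occurs with multiplicity exactly one in each of i_U ρ and i_V ρ; and every irreducible ℂ[J]-module occurring with nonzero multiplicity in both i_U ρ and i_V ρ is isomorphic to i_{U,V}ρ. -/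
/-!
Write `T = avgL U` (averaging over `U` from the left), so that `parInd U L V ρ` is the image
of `i_V ρ = indInfl V L ρ` under `T`, inside `i_U ρ = indInfl U L ρ`.

An intertwiner `Φ : i_V ρ → i_U ρ` is determined by `f ↦ Φ f 1`, which is invariant under
right translation by `U`. Since `J = V L U`, the sum of the right `U`-translates of `f` is
`F (∑ u, f u)` with `F w = (v l u ↦ ρ l w)`, so `Φ f 1` is the average of `f` over `U` followed
by the `L`-endomorphism `w ↦ Φ (F w) 1` of `ρ`, a scalar by Schur's lemma. Hence
`Hom_J(i_V ρ, i_U ρ) = ℂ T`, and symmetrically `Hom_J(i_U ρ, i_V ρ) = ℂ S` with `S = avgL V`.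

The rest holds for any intertwiner `T : B → A` spanning `Hom(B, A)`, by Maschke's theorem.
If `N ⊆ T B` is invariant, the projection onto `N` composed with `T` is `c T`, so `N` is `0` or
`T B`. A map `T B → A` composed with `T` is a multiple of `T`. A map `T B → B` extends to
`A → B`, so is a multiple of `S`, and `S ≠ 0` on `T B` because `T` has an equivariant section.
Finally, for an irreducible `π` embedded in both, `B → π → A` is `c T` with `c ≠ 0`, so the
embedding carries `π` onto `T B`.
-/

open scoped BigOperators

set_option maxHeartbeats 1000000
set_option synthInstance.maxHeartbeats 1000000

noncomputable section

namespace Parahoric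

variable {G : Type*} [Group G]

theorem _root_.Representation.IsIntertwiningMap.comp {k M₁ M₂ M₃ : Type*} [CommSemiring k]
    [AddCommMonoid M₁] [Module k M₁] [AddCommMonoid M₂] [Module k M₂] [AddCommMonoid M₃]
    [Module k M₃] {ρ₁ : Representation k G M₁} {ρ₂ : Representation k G M₂}
    {ρ₃ : Representation k G M₃} {f : M₂ →ₗ[k] M₃} {g : M₁ →ₗ[k] M₂} (hf : ρ₂.IsIntertwiningMap ρ₃ f)
    (hg : ρ₁.IsIntertwiningMap ρ₂ g) : ρ₁.IsIntertwiningMap ρ₃ (f ∘ₗ g) :=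
  ⟨fun x v => by simp [hg.isIntertwining, hf.isIntertwining]⟩

section Intertwiners

variable {M N : Type*} [AddCommGroup M] [Module ℂ M] [AddCommGroup N] [Module ℂ N]
  {σ : Representation ℂ G M} {τ : Representation ℂ G N}

theorem Stable.map {B : Submodule ℂ M} (hB : Stable σ B) {T : M →ₗ[ℂ] N}
    (hT : σ.IsIntertwiningMap τ T) : Stable τ (B.map T) := by
  rintro g _ ⟨x, hx, rfl⟩
  exact ⟨σ g x, hB g x hx, hT.isIntertwining g x⟩

theorem IsIrreducible.nontrivial (hσ : IsIrreducible σ) : Nontrivial M := by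
  obtain ⟨x, -, hx⟩ := (Submodule.ne_bot_iff _).mp hσ.1
  exact nontrivial_of_ne x 0 hx

theorem exists_eq_smul_of_isIntertwiningMap [FiniteDimensional ℂ M] (hσ : IsIrreducible σ)
    {β : M →ₗ[ℂ] M} (hβ : σ.IsIntertwiningMap σ β) : ∃ c : ℂ, ∀ x, β x = c • x := by
  have := hσ.nontrivial
  obtain ⟨c, hc⟩ := Module.End.exists_eigenvalue β
  have hstable : Stable σ (Module.End.eigenspace β c) := fun g y hy => by
    rw [Module.End.mem_eigenspace_iff] at hy ⊢
    rw [hβ.isIntertwining, hy, map_smul]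
  refine ⟨c, fun y => Module.End.mem_eigenspace_iff.mp ?_⟩
  rw [(hσ.2 _ hstable).resolve_left hc]
  exact Submodule.mem_top

theorem injective_of_mem_homFullSub (hτ : IsIrreducible τ) {A : Submodule ℂ M}
    {φ : N →ₗ[ℂ] A} (hφ : φ ∈ homFullSub τ σ A) (hφ0 : φ ≠ 0) : Function.Injective φ := by
  have hstable : Stable τ (LinearMap.ker φ) := fun g y hy => by
    rw [LinearMap.mem_ker] at hy ⊢
    exact Subtype.ext (by rw [hφ g y, hy]; simp)
  refine LinearMap.ker_eq_bot.mp ((hτ.2 _ hstable).resolve_right fun h => hφ0 ?_)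
  exact LinearMap.ker_eq_top.mp h

theorem isoFullSub_of_range_eq {φ : N →ₗ[ℂ] M} (hφ : τ.IsIntertwiningMap σ φ)
    (hinj : Function.Injective φ) {P : Submodule ℂ M} (hP : LinearMap.range φ = P) :
    IsoFullSub τ σ P :=
  ⟨LinearEquiv.ofInjective φ hinj ≪≫ₗ LinearEquiv.ofEq _ _ hP,
    fun g y => hφ.isIntertwining g y⟩

theorem dimC_eq_one {S : Submodule ℂ M} {v : M} (hv : v ∈ S) (hv0 : v ≠ 0)
    (hS : ∀ φ ∈ S, ∃ c : ℂ, φ = c • v) : dimC S = 1 := by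
  have hspan : S = Submodule.span ℂ {v} := by
    refine le_antisymm (fun φ hφ => ?_) ((Submodule.span_singleton_le_iff_mem v S).mpr hv)
    obtain ⟨c, rfl⟩ := hS φ hφ
    exact Submodule.smul_mem _ c (Submodule.mem_span_singleton_self v)
  rw [dimC, hspan]
  exact finrank_span_singleton hv0

theorem ne_bot_of_dimC_ne_zero {S : Submodule ℂ M} (hS : dimC S ≠ 0) : S ≠ ⊥ := by
  rintro rfl
  exact hS (finrank_bot ℂ M)

theorem exists_linear_section (T : M →ₗ[ℂ] N) (B : Submodule ℂ M) :
    ∃ s : N →ₗ[ℂ] M, (∀ y, s y ∈ B) ∧ ∀ y ∈ B.map T, T (s y) = y := by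
  obtain ⟨r, hr⟩ := (T.submoduleMap B).exists_rightInverse_of_surjective
    (LinearMap.range_eq_top.mpr (T.submoduleMap_surjective B))
  obtain ⟨s, hs⟩ := LinearMap.exists_extend r
  refine ⟨B.subtype ∘ₗ s, fun y => (s y).2, fun y hy => ?_⟩
  have h := congr(($hr ⟨y, hy⟩ : N))
  rw [← hs] at h
  exact h

theorem inv_card_smul_sum_const {ι : Type*} [Fintype ι] [Nonempty ι] (x : M) :
    (Fintype.card ι : ℂ)⁻¹ • ∑ _i : ι, x = x := by
  rw [Finset.sum_const, Finset.card_univ, ← Nat.cast_smul_eq_nsmul ℂ, smul_smul,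
    inv_mul_cancel₀ (Nat.cast_ne_zero.mpr Fintype.card_ne_zero), one_smul]

end Intertwiners

section Maschke

variable [Fintype G] {M N : Type*} [AddCommGroup M] [Module ℂ M] [AddCommGroup N] [Module ℂ N]
  {σ : Representation ℂ G M} {τ : Representation ℂ G N}

theorem averageMap_linHom_apply (f : N →ₗ[ℂ] M) (y : N) :
    (Representation.linHom τ σ).averageMap f y =
      (Fintype.card G : ℂ)⁻¹ • ∑ g, σ g (f (τ g⁻¹ y)) := by
  simp [Representation.averageMap, GroupAlgebra.average, map_sum]

theorem isIntertwiningMap_averageMap_linHom (f : N →ₗ[ℂ] M) :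
    τ.IsIntertwiningMap σ ((Representation.linHom τ σ).averageMap f) :=
  (Representation.mem_linHom_invariants_iff_isIntertwining _).mp fun g => by
    simpa using Representation.averageMap_invariant (Representation.linHom τ σ) f g

theorem inv_card_smul_sum_apply_apply_inv (y : N) :
    (Fintype.card G : ℂ)⁻¹ • ∑ g : G, τ g (τ g⁻¹ y) = y := by
  simp_rw [← Module.End.mul_apply, ← map_mul, mul_inv_cancel, map_one, Module.End.one_apply]
  exact inv_card_smul_sum_const y

theorem exists_intertwining_section {T : M →ₗ[ℂ] N} (hT : σ.IsIntertwiningMap τ T)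
    {B : Submodule ℂ M} (hB : Stable σ B) :
    ∃ s : N →ₗ[ℂ] M, τ.IsIntertwiningMap σ s ∧ (∀ y, s y ∈ B) ∧ ∀ y ∈ B.map T, T (s y) = y := by
  obtain ⟨s, hsB, hTs⟩ := exists_linear_section T B
  refine ⟨(Representation.linHom τ σ).averageMap s, isIntertwiningMap_averageMap_linHom s,
    fun y => ?_, fun y hy => ?_⟩
  · rw [averageMap_linHom_apply]
    exact B.smul_mem _ (B.sum_mem fun g _ => hB g _ (hsB _))
  · rw [averageMap_linHom_apply, map_smul, map_sum]
    simp_rw [hT.isIntertwining, hTs _ (hB.map hT _ y hy)]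
    exact inv_card_smul_sum_apply_apply_inv y

theorem exists_intertwining_projection {S : Submodule ℂ M} (hS : Stable σ S) :
    ∃ p : M →ₗ[ℂ] M, σ.IsIntertwiningMap σ p ∧ (∀ x, p x ∈ S) ∧ ∀ x ∈ S, p x = x := by
  simpa using exists_intertwining_section (T := LinearMap.id) ⟨fun _ _ => rfl⟩ hS

theorem exists_intertwining_retraction {ψ : N →ₗ[ℂ] M} (hψ : τ.IsIntertwiningMap σ ψ)
    (hinj : Function.Injective ψ) :
    ∃ q : M →ₗ[ℂ] N, σ.IsIntertwiningMap τ q ∧ ∀ x, q (ψ x) = x := by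
  obtain ⟨f, hf⟩ := ψ.exists_leftInverse_of_injective (LinearMap.ker_eq_bot.mpr hinj)
  refine ⟨(Representation.linHom σ τ).averageMap f, isIntertwiningMap_averageMap_linHom f,
    fun x => ?_⟩
  rw [averageMap_linHom_apply]
  simp_rw [← hψ.isIntertwining, ← LinearMap.comp_apply f ψ, hf, LinearMap.id_apply]
  exact inv_card_smul_sum_apply_apply_inv x

theorem exists_intertwining_extension {S : Submodule ℂ N} (hS : Stable τ S)
    {R : Submodule ℂ M} {φ : S →ₗ[ℂ] R} (hφ : φ ∈ homSubSub τ S σ R) :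
    ∃ Φ : N →ₗ[ℂ] M, τ.IsIntertwiningMap σ Φ ∧ (∀ y, Φ y ∈ R) ∧ ∀ y : S, Φ y = φ y := by
  obtain ⟨p, hp, hpS, hpid⟩ := exists_intertwining_projection hS
  refine ⟨R.subtype ∘ₗ φ ∘ₗ p.codRestrict S hpS, ⟨fun g y => ?_⟩, fun y => (φ _).2,
    fun y => congrArg (fun z => (φ z : M)) (Subtype.ext (hpid y y.2))⟩
  have h := hφ g (p.codRestrict S hpS y) (hS g _ (hpS y))
  simp only [LinearMap.comp_apply, Submodule.subtype_apply]
  rw [← h]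
  congr 2
  exact Subtype.ext (hp.isIntertwining g y)

end Maschke

section MultiplicityOne

variable {M N : Type*} [AddCommGroup M] [Module ℂ M] [AddCommGroup N] [Module ℂ N]
  {σ : Representation ℂ G M} {τ : Representation ℂ G N}
  {B : Submodule ℂ M} {A : Submodule ℂ N} {T : M →ₗ[ℂ] N}

/-- `Hom_G(B, A) = ℂ T`, tested on intertwiners of the ambient spaces; by
`exists_intertwining_extension` every intertwiner `B → A` extends to one of these. -/
def HomSpannedBy (σ : Representation ℂ G M) (B : Submodule ℂ M) (τ : Representation ℂ G N)
    (A : Submodule ℂ N) (T : M →ₗ[ℂ] N) : Prop :=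
  ∀ Φ : M →ₗ[ℂ] N, σ.IsIntertwiningMap τ Φ → (∀ x ∈ B, Φ x ∈ A) →
    ∃ c : ℂ, ∀ x ∈ B, Φ x = c • T x

variable [Fintype G]

theorem HomSpannedBy.isIrreducibleSub_map (h : HomSpannedBy σ B τ A T)
    (hT : σ.IsIntertwiningMap τ T) (hBA : B.map T ≤ A) (hne : B.map T ≠ ⊥) :
    IsIrreducibleSub τ (B.map T) := by
  refine ⟨hne, fun N' hN'P hN' => ?_⟩
  obtain ⟨p, hp, hpN', hpid⟩ := exists_intertwining_projection hN'
  obtain ⟨c, hc⟩ := h (p ∘ₗ T) (hp.comp hT) fun x _ => hBA (hN'P (hpN' _))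
  by_cases hc0 : c = 0
  · refine Or.inl (eq_bot_iff.mpr fun y hy => ?_)
    obtain ⟨x, hx, rfl⟩ := hN'P hy
    rw [Submodule.mem_bot, ← hpid _ hy]
    simpa [hc0] using hc x hx
  · refine Or.inr (le_antisymm hN'P ?_)
    rintro _ ⟨x, hx, rfl⟩
    have hTx : T x = c⁻¹ • p (T x) := by
      rw [← LinearMap.comp_apply p T, hc x hx, smul_smul, inv_mul_cancel₀ hc0, one_smul]
    rw [hTx]
    exact N'.smul_mem _ (hpN' _)

theorem HomSpannedBy.dimC_homSubSub_map_target (h : HomSpannedBy σ B τ A T)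
    (hT : σ.IsIntertwiningMap τ T) (hB : Stable σ B) (hBA : B.map T ≤ A) (hne : B.map T ≠ ⊥) :
    dimC (homSubSub τ (B.map T) τ A) = 1 := by
  refine dimC_eq_one (v := Submodule.inclusion hBA) (fun _ _ _ => rfl) ?_ fun φ hφ => ?_
  · obtain ⟨y, hy, hy0⟩ := Submodule.exists_mem_ne_zero_of_ne_bot hne
    exact fun h0 => hy0 congr(($h0 ⟨y, hy⟩ : N))
  · obtain ⟨Φ, hΦ, hΦA, hΦφ⟩ := exists_intertwining_extension (hB.map hT) hφ
    obtain ⟨c, hc⟩ := h (Φ ∘ₗ T) (hΦ.comp hT) fun x _ => hΦA _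
    refine ⟨c, LinearMap.ext fun y => Subtype.ext ?_⟩
    obtain ⟨_, ⟨x, hx, rfl⟩⟩ := y
    exact (hΦφ _).symm.trans (hc x hx)

theorem HomSpannedBy.dimC_homSubSub_map_source {S : N →ₗ[ℂ] M} (h : HomSpannedBy τ A σ B S)
    (hS : τ.IsIntertwiningMap σ S) (hAB : A.map S ≤ B) (hT : σ.IsIntertwiningMap τ T)
    (hB : Stable σ B) (hBA : B.map T ≤ A) (hne : B.map T ≠ ⊥) :
    dimC (homSubSub τ (B.map T) σ B) = 1 := by
  have hSB : ∀ y ∈ B.map T, S y ∈ B := fun y hy => hAB (Submodule.mem_map_of_mem (hBA hy))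
  refine dimC_eq_one (v := S.restrict hSB) (fun g y _ => hS.isIntertwining g y) ?_
    fun φ hφ => ?_
  · obtain ⟨s, hs, hsB, hTs⟩ := exists_intertwining_section hT hB
    obtain ⟨c, hc⟩ := h s hs fun y _ => hsB y
    obtain ⟨y, hy, hy0⟩ := Submodule.exists_mem_ne_zero_of_ne_bot hne
    intro h0
    have hSy : S y = 0 := congr(($h0 ⟨y, hy⟩ : M))
    exact hy0 (by rw [← hTs y hy, hc y (hBA hy), hSy, smul_zero, map_zero])
  · obtain ⟨Φ, hΦ, hΦB, hΦφ⟩ := exists_intertwining_extension (hB.map hT) hφ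
    obtain ⟨c, hc⟩ := h Φ hΦ fun y _ => hΦB y
    exact ⟨c, LinearMap.ext fun y => Subtype.ext ((hΦφ y).symm.trans (hc y (hBA y.2)))⟩

theorem HomSpannedBy.isoFullSub_map {W₂ : Type*} [AddCommGroup W₂] [Module ℂ W₂]
    {π : Representation ℂ G W₂} (h : HomSpannedBy σ B τ A T) (hπ : IsIrreducible π)
    (hA : homFullSub π τ A ≠ ⊥) (hB : homFullSub π σ B ≠ ⊥) :
    IsoFullSub π τ (B.map T) := by
  obtain ⟨φ, hφ, hφ0⟩ := Submodule.exists_mem_ne_zero_of_ne_bot hA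
  obtain ⟨ψ, hψ, hψ0⟩ := Submodule.exists_mem_ne_zero_of_ne_bot hB
  obtain ⟨q, hq, hqψ⟩ := exists_intertwining_retraction (ψ := B.subtype ∘ₗ ψ) ⟨hψ⟩
    (B.injective_subtype.comp (injective_of_mem_homFullSub hπ hψ hψ0))
  have hφ' : π.IsIntertwiningMap τ (A.subtype ∘ₗ φ) := ⟨hφ⟩
  obtain ⟨c, hc⟩ := h (A.subtype ∘ₗ φ ∘ₗ q) (hφ'.comp hq) fun x _ => (φ _).2
  have hφψ : ∀ w, (φ w : N) = c • T (ψ w) := fun w => by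
    simpa [show q (ψ w) = w from hqψ w] using hc (ψ w) (ψ w).2
  have hc0 : c ≠ 0 := by
    rintro rfl
    exact hφ0 (LinearMap.ext fun w => Subtype.ext (by simpa using hφψ w))
  refine isoFullSub_of_range_eq hφ'
    (A.injective_subtype.comp (injective_of_mem_homFullSub hπ hφ hφ0)) (le_antisymm ?_ ?_)
  · rintro _ ⟨w, rfl⟩
    change (φ w : N) ∈ B.map T
    rw [hφψ w]
    exact Submodule.smul_mem _ c (Submodule.mem_map_of_mem (ψ w).2)
  · rintro _ ⟨x, hx, rfl⟩
    have hx' : (φ (q x) : N) = c • T x := hc x hx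
    exact ⟨c⁻¹ • q x, by simp [hx', smul_smul, inv_mul_cancel₀ hc0]⟩

end MultiplicityOne

namespace IwahoriDecomp

variable {J : Type*} [Group J] {Y L X : Subgroup J}

theorem symm_s3 (h : IwahoriDecomp ⊤ Y L X) : IwahoriDecomp ⊤ X L Y := by
  obtain ⟨hY, hX, hbij⟩ := h
  let inv3 : J × J × J → J × J × J := fun p => (p.2.2⁻¹, p.2.1⁻¹, p.1⁻¹)
  have hinv3 : ∀ {A C : Subgroup J} {p : J × J × J},
      p ∈ (A : Set J) ×ˢ (L : Set J) ×ˢ (C : Set J) →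
        inv3 p ∈ (C : Set J) ×ˢ (L : Set J) ×ˢ (A : Set J) :=
    fun ⟨hA, hL, hC⟩ => ⟨inv_mem hC, inv_mem hL, inv_mem hA⟩
  have hmul : ∀ p : J × J × J,
      (inv3 p).1 * (inv3 p).2.1 * (inv3 p).2.2 = (p.1 * p.2.1 * p.2.2)⁻¹ := fun p => by
    simp [inv3, mul_assoc]
  refine ⟨hX, hY, fun _ _ => Subgroup.mem_top _, fun p hp p' hp' heq => ?_, fun g _ => ?_⟩
  · have h3 : inv3 p = inv3 p' := hbij.injOn (hinv3 hp) (hinv3 hp') (by simp only [hmul, heq])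
    simp only [inv3, Prod.ext_iff, inv_inj] at h3
    exact Prod.ext h3.2.2 (Prod.ext h3.2.1 h3.1)
  · obtain ⟨p, hp, hpg⟩ := hbij.surjOn (Subgroup.mem_top g⁻¹)
    have hpg' : p.1 * p.2.1 * p.2.2 = g⁻¹ := hpg
    exact ⟨inv3 p, hinv3 hp, (hmul p).trans (by rw [hpg', inv_inv])⟩

variable (h : IwahoriDecomp ⊤ Y L X)

/-- The `L`-component of `g = y * l * x`. -/
def levi (g : J) : L :=
  ⟨(Function.invFunOn (fun q : J × J × J => q.1 * q.2.1 * q.2.2)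
      ((Y : Set J) ×ˢ (L : Set J) ×ˢ (X : Set J)) g).2.1,
    (Function.invFunOn_pos (h.2.2.surjOn (Subgroup.mem_top g))).1.2.1⟩

theorem exists_mul_levi_mul (g : J) : ∃ y ∈ Y, ∃ x ∈ X, y * h.levi g * x = g :=
  have hg := Function.invFunOn_pos (h.2.2.surjOn (Subgroup.mem_top g))
  ⟨_, hg.1.1, _, hg.1.2.2, hg.2⟩

theorem levi_mul_mul {y l x : J} (hy : y ∈ Y) (hl : l ∈ L) (hx : x ∈ X) :
    (h.levi (y * l * x) : J) = l := by
  have hg := Function.invFunOn_pos (h.2.2.surjOn (Subgroup.mem_top (y * l * x)))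
  exact congrArg (fun q : J × J × J => q.2.1)
    (h.2.2.injOn hg.1 (show (y, l, x) ∈ _ from ⟨hy, hl, hx⟩) hg.2)

theorem levi_of_mem {x : J} (hx : x ∈ X) : h.levi x = 1 :=
  Subtype.ext (by simpa using h.levi_mul_mul Y.one_mem L.one_mem hx)

theorem levi_mul_mul_left {y l : J} (hy : y ∈ Y) (hl : l ∈ L) (g : J) :
    h.levi (y * l * g) = ⟨l, hl⟩ * h.levi g := by
  obtain ⟨y', hy', x', hx', hg⟩ := h.exists_mul_levi_mul g
  have hconj : l * y' * l⁻¹ ∈ Y := (Subgroup.mem_normalizer_iff.mp (h.1 hl) y').mp hy'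
  refine Subtype.ext (?_ : (h.levi (y * l * g) : J) = l * h.levi g)
  rw [← h.levi_mul_mul (Y.mul_mem hy hconj) (L.mul_mem hl (h.levi g).2) hx']
  conv_lhs => rw [← hg]
  congr 2
  group

theorem levi_mul_right (g : J) (l : L) : h.levi (g * l) = h.levi g * l := by
  obtain ⟨y', hy', x', hx', hg⟩ := h.exists_mul_levi_mul g
  have hconj : (l : J)⁻¹ * x' * l ∈ X := by
    simpa using (Subgroup.mem_normalizer_iff.mp (h.2.1 (inv_mem l.2)) x').mp hx'
  refine Subtype.ext ?_
  rw [Subgroup.coe_mul, ← h.levi_mul_mul hy' (L.mul_mem (h.levi g).2 l.2) hconj]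
  conv_lhs => rw [← hg]
  group

end IwahoriDecomp

section Induced

variable {J : Type*} [Group J] {Y L X : Subgroup J} {W : Type*} [AddCommGroup W] [Module ℂ W]
  {ρ : Representation ℂ L W}

theorem rtRep_apply (g : J) (f : J → W) (x : J) : rtRep J W g f x = f (x * g) := rfl

theorem stable_indInfl : Stable (rtRep J W) (indInfl Y L ρ) := fun g f hf u l x hu hl => by
  simpa [rtRep_apply, mul_assoc] using hf u l (x * g) hu hl

theorem apply_mul_of_mem_indInfl {f : J → W} (hf : f ∈ indInfl Y L ρ) {y : J} (hy : y ∈ Y)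
    (g : J) : f (y * g) = f g := by
  simpa [show (⟨1, L.one_mem⟩ : L) = 1 from rfl] using hf y 1 g hy L.one_mem

theorem apply_levi_mul_of_mem_indInfl {f : J → W} (hf : f ∈ indInfl Y L ρ) (l : L) (g : J) :
    f (l * g) = ρ l (f g) := by
  simpa using hf 1 l g Y.one_mem l.2

theorem avgL_apply [Fintype X] (f : J → W) (g : J) :
    avgL X W f g = (Nat.card X : ℂ)⁻¹ • ∑ x : X, f (x * g) := by
  rw [avgL, Subsingleton.elim (Fintype.ofFinite X) ‹_›]
  simp [lTrans]

theorem isIntertwiningMap_avgL [Finite X] :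
    (rtRep J W).IsIntertwiningMap (rtRep J W) (avgL X W) := ⟨fun g f => by
  have := Fintype.ofFinite X
  funext x
  simp only [avgL_apply, rtRep_apply, mul_assoc]⟩

theorem map_avgL_le_indInfl [Finite X] (hLX : L ≤ Subgroup.normalizer (X : Set J)) :
    (indInfl Y L ρ).map (avgL X W) ≤ indInfl X L ρ := by
  have := Fintype.ofFinite X
  rintro _ ⟨f, hf, rfl⟩ x₀ l g hx₀ hl
  let conj : X ≃ X := (MulAut.conj l⁻¹).toEquiv.subtypeEquiv
    (Subgroup.mem_normalizer_iff.mp (hLX (inv_mem hl)))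
  rw [avgL_apply, avgL_apply, map_smul, map_sum]
  congr 1
  calc ∑ x : X, f (x * (x₀ * l * g)) = ∑ x : X, f (x * (l * g)) :=
        Fintype.sum_equiv (Equiv.mulRight ⟨x₀, hx₀⟩) _ _ fun x => by simp [mul_assoc]
    _ = ∑ x : X, f (l * ((l⁻¹ * x * l) * g)) :=
        Finset.sum_congr rfl fun x _ => by simp [mul_assoc]
    _ = ∑ x : X, ρ ⟨l, hl⟩ (f (x * g)) := by
        simp_rw [apply_levi_mul_of_mem_indInfl hf ⟨l, hl⟩]
        exact Fintype.sum_equiv conj _ _ fun x => by simp [conj]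

end Induced

namespace IwahoriDecomp

variable {J : Type*} [Group J] {Y L X : Subgroup J} {W : Type*} [AddCommGroup W] [Module ℂ W]
  (h : IwahoriDecomp ⊤ Y L X) (ρ : Representation ℂ L W)

def leviInd : W →ₗ[ℂ] (J → W) :=
  LinearMap.pi fun g => ρ (h.levi g)

theorem leviInd_apply (w : W) (g : J) : h.leviInd ρ w g = ρ (h.levi g) w := rfl

theorem leviInd_mem (w : W) : h.leviInd ρ w ∈ indInfl Y L ρ := fun y l g hy hl => by
  rw [leviInd_apply, leviInd_apply, h.levi_mul_mul_left hy hl, map_mul, Module.End.mul_apply]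

theorem leviInd_apply_of_mem (w : W) {x : J} (hx : x ∈ X) : h.leviInd ρ w x = w := by
  rw [leviInd_apply, h.levi_of_mem hx, map_one, Module.End.one_apply]

theorem leviInd_map (l : L) (w : W) :
    h.leviInd ρ (ρ l w) = rtRep J W l (h.leviInd ρ w) := by
  funext g
  rw [rtRep_apply, leviInd_apply, leviInd_apply, h.levi_mul_right, map_mul,
    Module.End.mul_apply]

theorem sum_rtRep_eq_leviInd [Fintype X] {f : J → W} (hf : f ∈ indInfl Y L ρ) :
    ∑ x : X, rtRep J W x f = h.leviInd ρ (∑ x : X, f x) := by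
  funext g
  obtain ⟨y, hy, x₀, hx₀, hg⟩ := h.exists_mul_levi_mul g
  simp only [Finset.sum_apply, rtRep_apply, leviInd_apply, map_sum]
  calc ∑ x : X, f (g * x) = ∑ x : X, ρ (h.levi g) (f (x₀ * x)) :=
        Finset.sum_congr rfl fun x _ => by
          rw [← hf y _ _ hy (h.levi g).2]
          conv_lhs => rw [← hg]
          simp only [mul_assoc]
    _ = ∑ x : X, ρ (h.levi g) (f x) :=
        Fintype.sum_equiv (Equiv.mulLeft ⟨x₀, hx₀⟩) _ _ fun x => rfl

end IwahoriDecomp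

section Induced

variable {J : Type*} [Group J] {Y L X : Subgroup J} {W : Type*} [AddCommGroup W] [Module ℂ W]
  {ρ : Representation ℂ L W}

theorem homSpannedBy_avgL [Finite X] [FiniteDimensional ℂ W] (h : IwahoriDecomp ⊤ Y L X)
    (hρ : IsIrreducible ρ) :
    HomSpannedBy (rtRep J W) (indInfl Y L ρ) (rtRep J W) (indInfl X L ρ) (avgL X W) := by
  have := Fintype.ofFinite X
  intro Φ hΦ hΦX
  have hΦ1 : ∀ f g, Φ f g = Φ (rtRep J W g f) 1 := fun f g => by
    rw [hΦ.isIntertwining, rtRep_apply, one_mul]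
  let β : W →ₗ[ℂ] W := LinearMap.proj 1 ∘ₗ Φ ∘ₗ h.leviInd ρ
  have hβ : ρ.IsIntertwiningMap ρ β := ⟨fun l w => by
    have hl := apply_levi_mul_of_mem_indInfl (hΦX _ (h.leviInd_mem ρ w)) l 1
    rw [mul_one] at hl
    simp only [β, LinearMap.comp_apply, LinearMap.proj_apply, h.leviInd_map, ← hΦ1, hl]⟩
  obtain ⟨c, hc⟩ := exists_eq_smul_of_isIntertwiningMap hρ hβ
  have hkey : ∀ f ∈ indInfl Y L ρ, Φ f 1 = c • avgL X W f 1 := fun f hf => calc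
    Φ f 1 = (Nat.card X : ℂ)⁻¹ • ∑ x : X, Φ f x := by
      have hX : ∀ x : X, Φ f x = Φ f 1 := fun x => by
        simpa using apply_mul_of_mem_indInfl (hΦX f hf) x.2 1
      rw [Finset.sum_congr rfl fun x _ => hX x, Nat.card_eq_fintype_card,
        inv_card_smul_sum_const]
    _ = (Nat.card X : ℂ)⁻¹ • β (∑ x : X, f x) := by
      change _ = _ • Φ (h.leviInd ρ (∑ x : X, f x)) 1
      rw [← h.sum_rtRep_eq_leviInd ρ hf, map_sum, Finset.sum_apply]
      simp only [← hΦ1]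
    _ = c • avgL X W f 1 := by simp only [hc, avgL_apply, mul_one, smul_comm c]
  refine ⟨c, fun f hf => funext fun g => ?_⟩
  rw [hΦ1, hkey _ (stable_indInfl g f hf), isIntertwiningMap_avgL.isIntertwining, rtRep_apply,
    one_mul, Pi.smul_apply]

theorem map_avgL_ne_bot [Finite X] [Nontrivial W] (h : IwahoriDecomp ⊤ Y L X) :
    (indInfl Y L ρ).map (avgL X W) ≠ ⊥ := by
  have := Fintype.ofFinite X
  obtain ⟨w, hw⟩ := exists_ne (0 : W)
  refine (Submodule.ne_bot_iff _).mpr ⟨_, Submodule.mem_map_of_mem (h.leviInd_mem ρ w),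
    fun h0 => hw ?_⟩
  have h1 := congrFun h0 1
  simp only [avgL_apply, mul_one, h.leviInd_apply_of_mem ρ w (Subtype.mem _),
    Nat.card_eq_fintype_card, inv_card_smul_sum_const, Pi.zero_apply] at h1
  exact h1

end Induced

section Statement3

variable {J : Type*} [Group J] [Fintype J]

/-- Let `J = ULV` be a finite group with an Iwahori decomposition and let `ρ` be an
irreducible `ℂ[L]`-module.  Then the parahorically induced `ℂ[J]`-module
`i_{U,V}ρ = ℂ[J]e_V e_U ⊗_{ℂ[L]} ρ` (realized as the image of the averaging operator
`I_U` inside `i_U ρ`) is irreducible; it occurs with multiplicity exactly one in each of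
`i_U ρ` and `i_V ρ`; and every irreducible `ℂ[J]`-module occurring with nonzero
multiplicity in both `i_U ρ` and `i_V ρ` is isomorphic to `i_{U,V}ρ`.  (Multiplicity of
`π` in `X` means `dim_ℂ Hom_{ℂ[J]}(π, X)`.) -/
theorem parInd_irreducible_and_multiplicity_one
    (U L V : Subgroup J) (hIw : IwahoriDecomp (⊤ : Subgroup J) U L V)
    {W : Type*} [AddCommGroup W] [Module ℂ W] [FiniteDimensional ℂ W]
    (ρ : Representation ℂ ↥L W) (hρ : IsIrreducible ρ) :
    IsIrreducibleSub (rtRep J W) (parInd U L V ρ) ∧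
    dimC (M := ↥(parInd U L V ρ) →ₗ[ℂ] ↥(indInfl U L ρ))
      (homSubSub (rtRep J W) (parInd U L V ρ) (rtRep J W) (indInfl U L ρ)) = 1 ∧
    dimC (M := ↥(parInd U L V ρ) →ₗ[ℂ] ↥(indInfl V L ρ))
      (homSubSub (rtRep J W) (parInd U L V ρ) (rtRep J W) (indInfl V L ρ)) = 1 ∧
    ∀ {W₂ : Type} [AddCommGroup W₂] [Module ℂ W₂] [FiniteDimensional ℂ W₂]
      (π : Representation ℂ J W₂), IsIrreducible π →
      dimC (M := W₂ →ₗ[ℂ] ↥(indInfl U L ρ)) (homFullSub π (rtRep J W) (indInfl U L ρ)) ≠ 0 →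
      dimC (M := W₂ →ₗ[ℂ] ↥(indInfl V L ρ)) (homFullSub π (rtRep J W) (indInfl V L ρ)) ≠ 0 →
      IsoFullSub π (rtRep J W) (parInd U L V ρ) := by
  have := hρ.nontrivial
  have hT := homSpannedBy_avgL hIw.symm_s3 hρ
  have hPA : parInd U L V ρ ≤ indInfl U L ρ := map_avgL_le_indInfl hIw.1
  have hP : parInd U L V ρ ≠ ⊥ := map_avgL_ne_bot hIw.symm_s3
  refine ⟨hT.isIrreducibleSub_map isIntertwiningMap_avgL hPA hP,
    hT.dimC_homSubSub_map_target isIntertwiningMap_avgL stable_indInfl hPA hP,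
    (homSpannedBy_avgL hIw hρ).dimC_homSubSub_map_source isIntertwiningMap_avgL
      (map_avgL_le_indInfl hIw.2.1) isIntertwiningMap_avgL stable_indInfl hPA hP,
    fun π hπ hU hV => hT.isoFullSub_map hπ (ne_bot_of_dimC_ne_zero hU) (ne_bot_of_dimC_ne_zero hV)⟩

end Statement3


end Parahoric
end
end

section
/- Let π be an irreducible finite-dimensional ℂ[J]-module. Then dim_ℂ Hom_{ℂ[L]}(π^V, π^U) ≤ 1. If this dimension is 0, then r_{U,V}π = 0. If it is 1, then π^U, π^V and r_{U,V}π are pairwise isomorphic irreducible ℂ[L]-modules. -/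
/-!
For a nonzero `x ∈ π^V`, irreducibility gives `π = span (J·x)`, and since `J = ULV` and `x` is
`V`-fixed, `e_U π(ulv) x = e_U π(l) x`; hence `π^U = e_U π = e_U span (L·x)`. Three consequences
follow when `π^U ≠ 0`: `e_U` maps `π^V` onto `π^U`; it is injective on `π^V`, since a nonzero
`x ∈ π^V` with `e_U x = 0` would give `π^U = span (L·e_U x) = 0`; and every nonzero `L`-stable
subspace of `π^V` is all of `π^V`. So `e_U : π^V → π^U` is an `L`-isomorphism of irreducibles,
`r_{U,V}π = e_U π^V = π^U`, and by Schur's lemma `Hom_L(π^V, π^U) = ℂ·e_U`. Since also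
`J = VLU`, the same argument with `U` and `V` exchanged shows that `π^U` is irreducible. If `π^U`
or `π^V` vanishes, so do the Hom space and `r_{U,V}π ⊆ e_U π^V ∩ π^U`.
-/

open scoped BigOperators

set_option maxHeartbeats 1000000
set_option synthInstance.maxHeartbeats 1000000

noncomputable section

namespace Parahoric

variable {G : Type*} [Group G]

section Averaging

variable {W : Type*} [AddCommGroup W] [Module ℂ W] (π : Representation ℂ G W)
  (H : Subgroup G)

lemma map_mem_fixedSub_of_mem_normalizer {l : G} (hl : l ∈ Subgroup.normalizer (H : Set G))
    {x : W} (hx : x ∈ fixedSub π H) : π l x ∈ fixedSub π H := by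
  intro h hh
  have hconj : l⁻¹ * h * l ∈ H := (Subgroup.mem_normalizer_iff.mp hl _).mpr (by group; exact hh)
  calc π h (π l x) = π l (π (l⁻¹ * h * l) x) := by
        simp only [← Module.End.mul_apply, ← map_mul]; group
    _ = π l x := by rw [hx _ hconj]

lemma stable_fixedSub {L : Subgroup G} (hL : L ≤ Subgroup.normalizer (H : Set G)) :
    Stable (resRep π L) (fixedSub π H) :=
  fun l _ hx => map_mem_fixedSub_of_mem_normalizer π H (hL l.2) hx

variable [Finite H]

lemma avgMap_apply [Fintype H] (x : W) :
    avgMap π H x = (Nat.card H : ℂ)⁻¹ • ∑ h : H, π h x := by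
  simp only [avgMap, LinearMap.smul_apply, LinearMap.sum_apply]
  congr!

lemma map_avgMap_of_mem {h : G} (hh : h ∈ H) (x : W) : π h (avgMap π H x) = avgMap π H x := by
  cases nonempty_fintype H
  rw [avgMap_apply, map_smul, map_sum]
  congr 1
  exact Fintype.sum_equiv (Equiv.mulLeft ⟨h, hh⟩) _ _ fun a => by simp

lemma avgMap_map_of_mem {h : G} (hh : h ∈ H) (x : W) : avgMap π H (π h x) = avgMap π H x := by
  cases nonempty_fintype H
  rw [avgMap_apply, avgMap_apply]
  congr 1
  exact Fintype.sum_equiv (Equiv.mulRight ⟨h, hh⟩) _ _ fun a => by simp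

lemma avgMap_map_of_mem_normalizer {l : G} (hl : l ∈ Subgroup.normalizer (H : Set G)) (x : W) :
    avgMap π H (π l x) = π l (avgMap π H x) := by
  cases nonempty_fintype H
  rw [avgMap_apply, avgMap_apply, map_smul, map_sum]
  congr 1
  refine (Fintype.sum_equiv ((MulAut.conj l).toEquiv.subtypeEquiv
    (Subgroup.mem_normalizer_iff.mp hl)) _ _ fun a => ?_).symm
  simp [← Module.End.mul_apply, ← map_mul]

lemma avgMap_mem_fixedSub (x : W) : avgMap π H x ∈ fixedSub π H :=
  fun _ hh => map_avgMap_of_mem π H hh x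

lemma avgMap_eq_self {x : W} (hx : x ∈ fixedSub π H) : avgMap π H x = x := by
  cases nonempty_fintype H
  rw [avgMap_apply, Finset.sum_congr rfl fun (h : H) _ => hx h h.2, Finset.sum_const,
    Finset.card_univ, ← Nat.card_eq_fintype_card, ← Nat.cast_smul_eq_nsmul ℂ, smul_smul,
    inv_mul_cancel₀ (Nat.cast_ne_zero.mpr Nat.card_pos.ne'), one_smul]

lemma range_avgMap : LinearMap.range (avgMap π H) = fixedSub π H :=
  le_antisymm (LinearMap.range_le_iff_comap.mpr
    (Submodule.eq_top_iff'.mpr (avgMap_mem_fixedSub π H))) fun x hx => ⟨x, avgMap_eq_self π H hx⟩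

end Averaging

section Schur

variable {W₁ W₂ : Type*} [AddCommGroup W₁] [Module ℂ W₁] [AddCommGroup W₂] [Module ℂ W₂]
  {ρ : Representation ℂ G W₁} {τ : Representation ℂ G W₂} {S : Submodule ℂ W₁}
  {T : Submodule ℂ W₂}

lemma span_orbit_eq_top (hρ : IsIrreducible ρ) {x : W₁} (hx : x ≠ 0) :
    Submodule.span ℂ (Set.range fun g : G => ρ g x) = ⊤ := by
  refine (hρ.2 _ fun g y hy => ?_).resolve_left fun h => hx ?_
  · have hmap : (Submodule.span ℂ (Set.range fun g : G => ρ g x)).map (ρ g) ≤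
        Submodule.span ℂ (Set.range fun g : G => ρ g x) := by
      rw [Submodule.map_span, Submodule.span_le]
      rintro _ ⟨_, ⟨g', rfl⟩, rfl⟩
      exact Submodule.subset_span ⟨g * g', by simp⟩
    exact hmap ⟨y, hy, rfl⟩
  · have hx_mem : x ∈ Submodule.span ℂ (Set.range fun g : G => ρ g x) :=
      Submodule.subset_span ⟨1, by simp⟩
    simpa [h] using hx_mem

lemma dimC_homSubSub_eq_zero (h : S = ⊥ ∨ T = ⊥) :
    dimC (M := S →ₗ[ℂ] T) (homSubSub ρ S τ T) = 0 := by
  have : Subsingleton (S →ₗ[ℂ] T) := by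
    rcases h with rfl | rfl
    · exact ⟨fun φ ψ => LinearMap.ext fun x => by
        rw [Subsingleton.elim x 0, map_zero, map_zero]⟩
    · infer_instance
  exact Module.finrank_zero_of_subsingleton

lemma IsIrreducibleSub.eq_zero_of_mem_homSubSub (hS : IsIrreducibleSub ρ S) (hst : Stable ρ S)
    {φ : S →ₗ[ℂ] T} (hφ : φ ∈ homSubSub ρ S τ T) {v : S} (hv : v ≠ 0) (hφv : φ v = 0) :
    φ = 0 := by
  have hK : Stable ρ ((LinearMap.ker φ).map S.subtype) := by
    rintro g _ ⟨x, hx, rfl⟩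
    refine ⟨⟨ρ g x, hst g x x.2⟩, ?_, rfl⟩
    simp only [SetLike.mem_coe, LinearMap.mem_ker] at hx ⊢
    exact Subtype.ext ((hφ g x _).trans (by simp [hx]))
  rcases hS.2 _ (Submodule.map_subtype_le _ _) hK with h | h
  · exact absurd (by simpa using (Submodule.eq_bot_iff _).mp h v ⟨v, hφv, rfl⟩) hv
  · refine LinearMap.ext fun x => ?_
    obtain ⟨y, hy, hyx⟩ := h.ge x.2
    exact (Subtype.ext hyx : y = x) ▸ hy

lemma homSubSub_eq_span_singleton [FiniteDimensional ℂ S] (hS : IsIrreducibleSub ρ S)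
    (hst : Stable ρ S) (E : S ≃ₗ[ℂ] T) (hE : (E : S →ₗ[ℂ] T) ∈ homSubSub ρ S τ T) :
    homSubSub ρ S τ T = Submodule.span ℂ {(E : S →ₗ[ℂ] T)} := by
  refine le_antisymm (fun φ hφ => ?_) (by simpa using hE)
  have : Nontrivial S := Submodule.nontrivial_iff_ne_bot.mpr hS.1
  obtain ⟨μ, hμ⟩ := Module.End.exists_eigenvalue (E.symm.toLinearMap ∘ₗ φ)
  obtain ⟨v, hv⟩ := hμ.exists_hasEigenvector
  have hφv : (φ - μ • (E : S →ₗ[ℂ] T)) v = 0 := by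
    have := congrArg E hv.apply_eq_smul
    simp_all
  have := hS.eq_zero_of_mem_homSubSub hst (sub_mem hφ (Submodule.smul_mem _ μ hE)) hv.2 hφv
  rw [sub_eq_zero.mp this]
  exact Submodule.smul_mem _ μ (Submodule.mem_span_singleton_self _)

lemma dimC_homSubSub_eq_one [FiniteDimensional ℂ S] (hS : IsIrreducibleSub ρ S)
    (hst : Stable ρ S) (E : S ≃ₗ[ℂ] T) (hE : (E : S →ₗ[ℂ] T) ∈ homSubSub ρ S τ T) :
    dimC (M := S →ₗ[ℂ] T) (homSubSub ρ S τ T) = 1 := by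
  have : Nontrivial S := Submodule.nontrivial_iff_ne_bot.mpr hS.1
  rw [dimC, homSubSub_eq_span_singleton hS hst E hE]
  obtain ⟨v, hv⟩ := exists_ne (0 : S)
  exact finrank_span_singleton fun h => hv (E.map_eq_zero_iff.mp (LinearMap.congr_fun h v))

lemma IsoSubSub.refl : IsoSubSub ρ S ρ S :=
  ⟨LinearEquiv.refl ℂ S, fun _ _ _ => rfl⟩

lemma IsoSubSub.symm (hst : Stable ρ S) : IsoSubSub ρ S τ T → IsoSubSub τ T ρ S := by
  rintro ⟨E, hE⟩
  refine ⟨E.symm, fun g y hy => ?_⟩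
  have h := hE g (E.symm y) (hst g _ (E.symm y).2)
  rw [LinearEquiv.apply_symm_apply] at h
  rw [show (⟨τ g y, hy⟩ : T) = E ⟨ρ g (E.symm y), hst g _ (E.symm y).2⟩ from Subtype.ext h.symm,
    LinearEquiv.symm_apply_apply]

end Schur

section IwahoriDecomposition

open scoped Pointwise

lemma IwahoriDecomp.mul_mul_eq_univ {U L V : Subgroup G} (h : IwahoriDecomp ⊤ U L V) :
    (U : Set G) * (L : Set G) * (V : Set G) = Set.univ := by
  refine Set.eq_univ_of_forall fun g => ?_
  obtain ⟨⟨u, l, v⟩, ⟨hu, hl, hv⟩, rfl⟩ :=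
    h.2.2.surjOn (by simp : g ∈ ((⊤ : Subgroup G) : Set G))
  exact Set.mul_mem_mul (Set.mul_mem_mul hu hl) hv

lemma mul_mul_eq_univ_swap {U L V : Subgroup G}
    (h : (U : Set G) * (L : Set G) * (V : Set G) = Set.univ) :
    (V : Set G) * (L : Set G) * (U : Set G) = Set.univ := by
  simpa [mul_inv_rev, mul_assoc] using congrArg (·⁻¹) h

variable {W : Type*} [AddCommGroup W] [Module ℂ W] (π : Representation ℂ G W)
  {U L V : Subgroup G} [Finite U]

lemma parRes_eq_map [Finite V] : parRes π U V = (fixedSub π V).map (avgMap π U) := by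
  rw [parRes, LinearMap.range_comp, range_avgMap]

lemma parRes_le_fixedSub [Finite V] : parRes π U V ≤ fixedSub π U :=
  range_avgMap π U ▸ LinearMap.range_comp_le_range _ _

lemma fixedSub_le_map_avgMap_span_orbit
    (hdec : (U : Set G) * (L : Set G) * (V : Set G) = Set.univ) (hπ : IsIrreducible π) {x : W}
    (hxV : x ∈ fixedSub π V) (hx : x ≠ 0) :
    fixedSub π U ≤ (Submodule.span ℂ (Set.range fun l : L => π l x)).map (avgMap π U) := by
  intro w hw
  have hw_mem : w ∈ (Submodule.span ℂ (Set.range fun g : G => π g x)).map (avgMap π U) := by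
    rw [span_orbit_eq_top hπ hx]
    exact ⟨w, trivial, avgMap_eq_self π U hw⟩
  refine (Submodule.map_span_le _ _ _).mpr ?_ hw_mem
  rintro _ ⟨g, rfl⟩
  obtain ⟨_, ⟨u, hu, l, hl, rfl⟩, v, hv, rfl⟩ := Set.eq_univ_iff_forall.mp hdec g
  have hulv : avgMap π U (π (u * l * v) x) = avgMap π U (π l x) := by
    rw [map_mul, map_mul, Module.End.mul_apply, Module.End.mul_apply, hxV v hv,
      avgMap_map_of_mem π U hu]
  exact hulv ▸ Submodule.mem_map_of_mem (Submodule.subset_span ⟨⟨l, hl⟩, rfl⟩)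

lemma eq_zero_of_avgMap_eq_zero (hnU : L ≤ Subgroup.normalizer (U : Set G))
    (hdec : (U : Set G) * (L : Set G) * (V : Set G) = Set.univ) (hπ : IsIrreducible π)
    (hU : fixedSub π U ≠ ⊥) {x : W} (hxV : x ∈ fixedSub π V) (hx : avgMap π U x = 0) :
    x = 0 := by
  by_contra hx0
  refine hU (le_bot_iff.mp ((fixedSub_le_map_avgMap_span_orbit π hdec hπ hxV hx0).trans ?_))
  rw [Submodule.map_span_le]
  rintro _ ⟨l, rfl⟩
  rw [avgMap_map_of_mem_normalizer π U (hnU l.2), hx, map_zero]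
  exact zero_mem _

lemma map_avgMap_fixedSub (hnV : L ≤ Subgroup.normalizer (V : Set G))
    (hdec : (U : Set G) * (L : Set G) * (V : Set G) = Set.univ) (hπ : IsIrreducible π)
    (hV : fixedSub π V ≠ ⊥) : (fixedSub π V).map (avgMap π U) = fixedSub π U := by
  refine le_antisymm (Submodule.map_le_iff_le_comap.mpr fun x _ => avgMap_mem_fixedSub π U x) ?_
  obtain ⟨x, hxV, hx⟩ := Submodule.exists_mem_ne_zero_of_ne_bot hV
  refine (fixedSub_le_map_avgMap_span_orbit π hdec hπ hxV hx).trans (Submodule.map_mono ?_)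
  rw [Submodule.span_le]
  rintro _ ⟨l, rfl⟩
  exact map_mem_fixedSub_of_mem_normalizer π V (hnV l.2) hxV

lemma isIrreducibleSub_fixedSub (hnU : L ≤ Subgroup.normalizer (U : Set G))
    (hdec : (U : Set G) * (L : Set G) * (V : Set G) = Set.univ) (hπ : IsIrreducible π)
    (hU : fixedSub π U ≠ ⊥) (hV : fixedSub π V ≠ ⊥) :
    IsIrreducibleSub (resRep π L) (fixedSub π V) := by
  refine ⟨hV, fun T hTV hT => or_iff_not_imp_left.mpr fun hT0 => le_antisymm hTV fun y hyV => ?_⟩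
  obtain ⟨x, hxT, hx⟩ := Submodule.exists_mem_ne_zero_of_ne_bot hT0
  obtain ⟨z, hz, hzy⟩ := fixedSub_le_map_avgMap_span_orbit π hdec hπ (hTV hxT) hx
    (avgMap_mem_fixedSub π U y)
  have hzT : z ∈ T := (Submodule.span_le.mpr (by rintro _ ⟨l, rfl⟩; exact hT l x hxT)) hz
  have hzy_eq : z - y = 0 := eq_zero_of_avgMap_eq_zero π hnU hdec hπ hU
    (sub_mem (hTV hzT) hyV) (by rw [map_sub, hzy, sub_self])
  rwa [← sub_eq_zero.mp hzy_eq]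

lemma exists_avgMap_equiv_mem_homSubSub (hnU : L ≤ Subgroup.normalizer (U : Set G))
    (hnV : L ≤ Subgroup.normalizer (V : Set G))
    (hdec : (U : Set G) * (L : Set G) * (V : Set G) = Set.univ) (hπ : IsIrreducible π)
    (hU : fixedSub π U ≠ ⊥) (hV : fixedSub π V ≠ ⊥) :
    ∃ E : fixedSub π V ≃ₗ[ℂ] fixedSub π U,
      (E : fixedSub π V →ₗ[ℂ] fixedSub π U) ∈
        homSubSub (resRep π L) (fixedSub π V) (resRep π L) (fixedSub π U) := by
  let f : fixedSub π V →ₗ[ℂ] fixedSub π U :=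
    (avgMap π U).restrict fun x _ => avgMap_mem_fixedSub π U x
  have hinj : Function.Injective f := by
    refine (injective_iff_map_eq_zero f).mpr fun x hx => Subtype.ext ?_
    exact eq_zero_of_avgMap_eq_zero π hnU hdec hπ hU x.2 (congrArg Subtype.val hx)
  have hsurj : Function.Surjective f := by
    rintro ⟨y, hy⟩
    obtain ⟨x, hxV, rfl⟩ := (map_avgMap_fixedSub π hnV hdec hπ hV).ge hy
    exact ⟨⟨x, hxV⟩, rfl⟩
  exact ⟨LinearEquiv.ofBijective f ⟨hinj, hsurj⟩, fun l x _ =>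
    avgMap_map_of_mem_normalizer π U (hnU l.2) x⟩

end IwahoriDecomposition

section Statement8

variable {J : Type*} [Group J] [Fintype J]

/-- Let `J = ULV` be a finite group with an Iwahori decomposition and `π` an irreducible
finite-dimensional `ℂ[J]`-module.  Then `dim Hom_{ℂ[L]}(π^V, π^U) ≤ 1`; if this dimension
is `0` then `r_{U,V}π = 0`; if it is `1` then `π^U`, `π^V` and `r_{U,V}π` are pairwise
isomorphic irreducible `ℂ[L]`-modules. -/
theorem parRes_schur
    (U L V : Subgroup J) (hIw : IwahoriDecomp (⊤ : Subgroup J) U L V)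
    {W : Type*} [AddCommGroup W] [Module ℂ W] [FiniteDimensional ℂ W]
    (π : Representation ℂ J W) (hπ : IsIrreducible π) :
    dimC (M := ↥(fixedSub π V) →ₗ[ℂ] ↥(fixedSub π U))
        (homSubSub (resRep π L) (fixedSub π V) (resRep π L) (fixedSub π U)) ≤ 1 ∧
    (dimC (M := ↥(fixedSub π V) →ₗ[ℂ] ↥(fixedSub π U))
        (homSubSub (resRep π L) (fixedSub π V) (resRep π L) (fixedSub π U)) = 0 →
      parRes π U V = ⊥) ∧
    (dimC (M := ↥(fixedSub π V) →ₗ[ℂ] ↥(fixedSub π U))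
        (homSubSub (resRep π L) (fixedSub π V) (resRep π L) (fixedSub π U)) = 1 →
      IsIrreducibleSub (resRep π L) (fixedSub π U) ∧
      IsIrreducibleSub (resRep π L) (fixedSub π V) ∧
      IsIrreducibleSub (resRep π L) (parRes π U V) ∧
      IsoSubSub (resRep π L) (fixedSub π U) (resRep π L) (fixedSub π V) ∧
      IsoSubSub (resRep π L) (fixedSub π U) (resRep π L) (parRes π U V) ∧
      IsoSubSub (resRep π L) (fixedSub π V) (resRep π L) (parRes π U V)) := by
  have hdec := hIw.mul_mul_eq_univ
  obtain ⟨hnU, hnV, -⟩ := hIw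
  by_cases hdeg : fixedSub π V = ⊥ ∨ fixedSub π U = ⊥
  · have hdim := dimC_homSubSub_eq_zero (ρ := resRep π L) (τ := resRep π L) hdeg
    refine ⟨by omega, fun _ => ?_, by omega⟩
    rcases hdeg with hV | hU
    · rw [parRes_eq_map, hV, Submodule.map_bot]
    · exact le_bot_iff.mp (hU ▸ parRes_le_fixedSub π)
  obtain ⟨hV, hU⟩ := not_or.mp hdeg
  have hirrV := isIrreducibleSub_fixedSub π hnU hdec hπ hU hV
  have hirrU := isIrreducibleSub_fixedSub π hnV (mul_mul_eq_univ_swap hdec) hπ hV hU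
  obtain ⟨E, hE⟩ := exists_avgMap_equiv_mem_homSubSub π hnU hnV hdec hπ hU hV
  have hdim := dimC_homSubSub_eq_one hirrV (stable_fixedSub π V hnV) E hE
  have hres : parRes π U V = fixedSub π U := by
    rw [parRes_eq_map, map_avgMap_fixedSub π hnV hdec hπ hV]
  refine ⟨hdim.le, by omega, fun _ => ?_⟩
  rw [hres]
  exact ⟨hirrU, hirrV, hirrU, IsoSubSub.symm (stable_fixedSub π V hnV) ⟨E, hE⟩, IsoSubSub.refl,
    ⟨E, hE⟩⟩

end Statement8

end Parahoric
end
end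

section
/- Let π be an irreducible finite-dimensional ℂ[J]-module with character χ_π. If r_{U,V}π = 0, then for every l ∈ L one has |U|⁻¹|V|⁻¹ ∑_{u∈U} ∑_{v∈V} χ_π(u·l·v) = 0. Otherwise ρ := r_{U,V}π is an irreducible ℂ[L]-module and for every l ∈ L one has |U|⁻¹|V|⁻¹ ∑_{u∈U} ∑_{v∈V} χ_π(u·l·v) = (dim ρ / dim π) · χ_ρ(l), where χ_ρ is the character of ρ. -/
open scoped BigOperators

set_option maxHeartbeats 1000000
set_option synthInstance.maxHeartbeats 1000000

noncomputable section

namespace Parahoric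

variable {G : Type*} [Group G]

/-!
Write `A = π(e_U)` and `B = π(e_V)`. Averaging `π(g) A B π(g)⁻¹` over `g ∈ J = ULV` and applying
Schur's lemma gives `(AB)²A = κ A` with `κ = tr(AB) / dim π`. Since also `J = VLU` and `U` fixes
`r_{U,V}π = AB·π`, every nonzero `L`-stable subspace `T` of `r_{U,V}π` satisfies
`r_{U,V}π = AB·T`; counting dimensions, `r_{U,V}π` is irreducible, and `AB` acts on it by a scalar
`c ≠ 0`. Then `c² = κ = c · dim ρ / dim π`, so `c = dim ρ / dim π`, and for `l ∈ L`
`tr(A π(l) B) = tr(π(l) AB) = c · χ_ρ(l)`.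
-/

section Averaging

variable {W : Type*} [AddCommGroup W] [Module ℂ W] (π : Representation ℂ G W)
  {H : Subgroup G} [Fintype H]

theorem avgMap_eq_sum : avgMap π H = (Fintype.card H : ℂ)⁻¹ • ∑ h : H, π h := by
  rw [avgMap, Subsingleton.elim (Fintype.ofFinite H) ‹_›, Nat.card_eq_fintype_card]

theorem sum_rep_eq_smul_avgMap : ∑ h : H, π h = (Fintype.card H : ℂ) • avgMap π H := by
  rw [avgMap_eq_sum, smul_smul, mul_inv_cancel₀ (Nat.cast_ne_zero.mpr Fintype.card_ne_zero),
    one_smul]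

theorem rep_mul_avgMap {h : G} (hh : h ∈ H) : π h * avgMap π H = avgMap π H := by
  rw [avgMap_eq_sum, mul_smul_comm, Finset.mul_sum]
  congr 1
  refine Fintype.sum_equiv (Equiv.mulLeft ⟨h, hh⟩) _ _ fun k => ?_
  simp

theorem avgMap_mul_rep {h : G} (hh : h ∈ H) : avgMap π H * π h = avgMap π H := by
  rw [avgMap_eq_sum, smul_mul_assoc, Finset.sum_mul]
  congr 1
  refine Fintype.sum_equiv (Equiv.mulRight ⟨h, hh⟩) _ _ fun k => ?_
  simp

theorem avgMap_mul_self : avgMap π H * avgMap π H = avgMap π H := by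
  nth_rewrite 1 [avgMap_eq_sum]
  rw [smul_mul_assoc, Finset.sum_mul, Finset.sum_congr rfl fun h _ => rep_mul_avgMap π h.2,
    Finset.sum_const, Finset.card_univ, ← Nat.cast_smul_eq_nsmul ℂ, smul_smul,
    inv_mul_cancel₀ (Nat.cast_ne_zero.mpr Fintype.card_ne_zero), one_smul]

theorem rep_mul_avgMap_comm {l : G} (hl : l ∈ Subgroup.normalizer (H : Set G)) :
    π l * avgMap π H = avgMap π H * π l := by
  have hconj : ∑ h : H, π l * π h * π l⁻¹ = ∑ h : H, π h :=
    Fintype.sum_equiv ((MulAut.conj l).toEquiv.subtypeEquiv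
      fun h => Subgroup.mem_normalizer_iff.mp hl h) _ _ fun h => by simp [← map_mul]
  rw [avgMap_eq_sum, mul_smul_comm, smul_mul_assoc, Finset.mul_sum, ← hconj, Finset.sum_mul]
  simp [mul_assoc, ← map_mul]

theorem trace_avgMap_mul_rep_mul_avgMap (U V : Subgroup G) [Fintype U] [Fintype V] (g : G) :
    LinearMap.trace ℂ W (avgMap π U * π g * avgMap π V) =
      (Fintype.card U : ℂ)⁻¹ * (Fintype.card V : ℂ)⁻¹ *
        ∑ u : U, ∑ v : V, LinearMap.trace ℂ W (π (u * g * v)) := by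
  simp only [avgMap_eq_sum, smul_mul_assoc, mul_smul_comm, Finset.sum_mul, Finset.mul_sum,
    map_mul, map_smul, map_sum, smul_eq_mul, mul_assoc]
  rw [Finset.sum_comm]
  simp only [mul_left_comm]

end Averaging

section Irreducible

variable {W : Type*} [AddCommGroup W] [Module ℂ W] {π : Representation ℂ G W}

theorem IsIrreducible.isIrreducibleSub_top (hπ : IsIrreducible π) : IsIrreducibleSub π ⊤ :=
  ⟨hπ.1, fun T _ hT => hπ.2 T hT⟩

theorem IsIrreducible.eq_top_of_rep_mem {T M : Submodule ℂ W} (hπ : IsIrreducible π)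
    (hT : T ≠ ⊥) (hTM : ∀ g, ∀ t ∈ T, π g t ∈ M) : M = ⊤ := by
  let M' : Submodule ℂ W := ⨅ g, M.comap (π g)
  have hM' : M' = ⊤ := by
    refine (hπ.2 M' fun g x hx => ?_).resolve_left fun h => hT (eq_bot_iff.mpr ?_)
    · simp_rw [M', Submodule.mem_iInf, Submodule.mem_comap] at hx ⊢
      intro h
      simpa [← Module.End.mul_apply, ← map_mul] using hx (h * g)
    · exact h ▸ fun t ht => Submodule.mem_iInf _ |>.mpr fun g => hTM g t ht
  refine eq_top_iff.mpr fun x _ => ?_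
  simpa using (Submodule.mem_iInf _).mp (hM' ▸ Submodule.mem_top : x ∈ M') 1

variable [FiniteDimensional ℂ W]

theorem IsIrreducibleSub.exists_eq_smul {S : Submodule ℂ W} (hS : IsIrreducibleSub π S)
    (hSπ : Stable π S) (T : Module.End ℂ W) (hTS : ∀ x ∈ S, T x ∈ S)
    (hT : ∀ g, π g * T = T * π g) : ∃ c : ℂ, ∀ x ∈ S, T x = c • x := by
  have : Nontrivial S := Submodule.nontrivial_iff_ne_bot.mpr hS.1
  obtain ⟨c, hc⟩ := Module.End.exists_eigenvalue (T.restrict hTS)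
  let E : Submodule ℂ W := S ⊓ LinearMap.ker (T - c • 1)
  have hE : E = S := by
    refine (hS.2 E inf_le_left fun g x hx => ⟨hSπ g x hx.1, ?_⟩).resolve_left fun h => ?_
    · have hx' : T x = c • x := sub_eq_zero.mp hx.2
      have : T (π g x) = c • π g x := by
        rw [← Module.End.mul_apply, ← hT g, Module.End.mul_apply, hx', map_smul]
      simpa [sub_eq_zero] using this
    · obtain ⟨⟨x, hxS⟩, hx, hx0⟩ := hc.exists_hasEigenvector
      refine hx0 (Subtype.ext ((Submodule.mem_bot ℂ).mp (h ▸ ⟨hxS, ?_⟩)))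
      simpa [sub_eq_zero] using congrArg Subtype.val (Module.End.mem_eigenspace_iff.mp hx)
  exact ⟨c, fun x hx => sub_eq_zero.mp (hE ▸ hx : x ∈ E).2⟩

theorem IsIrreducible.finrank_ne_zero (hπ : IsIrreducible π) : (Module.finrank ℂ W : ℂ) ≠ 0 := by
  have : Nontrivial W := (Submodule.nontrivial_iff ℂ).mp (nontrivial_of_ne _ _ hπ.1)
  exact Nat.cast_ne_zero.mpr Module.finrank_pos.ne'

theorem IsIrreducible.sum_conj_eq_smul_one [Fintype G] (hπ : IsIrreducible π)
    (X : Module.End ℂ W) :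
    ∑ g, π g * X * π g⁻¹ =
      ((Fintype.card G : ℂ) * LinearMap.trace ℂ W X / Module.finrank ℂ W) • 1 := by
  obtain ⟨c, hc⟩ := hπ.isIrreducibleSub_top.exists_eq_smul (fun _ _ _ => trivial)
    (∑ g, π g * X * π g⁻¹) (fun _ _ => trivial) fun h => by
      rw [Finset.mul_sum, Finset.sum_mul]
      refine Fintype.sum_equiv (Equiv.mulLeft h) _ _ fun g => ?_
      have hh : π h⁻¹ * π h = 1 := by rw [← map_mul, inv_mul_cancel, map_one]
      simp [map_mul, mul_assoc, hh]
  have hsum : ∑ g, π g * X * π g⁻¹ = c • 1 := LinearMap.ext fun x => hc x trivial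
  have htrace_conj (g : G) : LinearMap.trace ℂ W (π g * X * π g⁻¹) = LinearMap.trace ℂ W X := by
    rw [LinearMap.trace_mul_cycle, ← map_mul, inv_mul_cancel, map_one, one_mul]
  have htrace := congrArg (LinearMap.trace ℂ W) hsum
  simp only [map_sum, htrace_conj, Finset.sum_const, Finset.card_univ, nsmul_eq_mul, map_smul,
    LinearMap.trace_one, smul_eq_mul] at htrace
  rw [hsum, htrace, mul_div_cancel_right₀ _ hπ.finrank_ne_zero]

end Irreducible

section Iwahori

variable {U L V : Subgroup G}

theorem IwahoriDecomp.bijective (hIw : IwahoriDecomp ⊤ U L V) :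
    Function.Bijective fun q : U × L × V => (q.1 : G) * q.2.1 * q.2.2 := by
  obtain ⟨-, -, -, hinj, hsurj⟩ := hIw
  refine ⟨?_, fun g => ?_⟩
  · rintro ⟨⟨u, hu⟩, ⟨l, hl⟩, ⟨v, hv⟩⟩ ⟨⟨u', hu'⟩, ⟨l', hl'⟩, ⟨v', hv'⟩⟩ h
    have := @hinj (u, l, v) ⟨hu, hl, hv⟩ (u', l', v') ⟨hu', hl', hv'⟩ h
    simp_all
  · obtain ⟨⟨u, l, v⟩, ⟨hu, hl, hv⟩, hg⟩ := hsurj (Set.mem_univ g)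
    exact ⟨(⟨u, hu⟩, ⟨l, hl⟩, ⟨v, hv⟩), hg⟩

variable [Fintype G] [Fintype U] [Fintype L] [Fintype V]

theorem IwahoriDecomp.sum_eq (hIw : IwahoriDecomp ⊤ U L V) {M : Type*} [AddCommMonoid M]
    (F : G → M) : ∑ g, F g = ∑ u : U, ∑ l : L, ∑ v : V, F (u * l * v) := by
  simp only [← Fintype.sum_prod_type']
  exact (Fintype.sum_bijective _ hIw.bijective _ _ fun _ => rfl).symm

theorem IwahoriDecomp.card_eq (hIw : IwahoriDecomp ⊤ U L V) :
    Fintype.card G = Fintype.card U * Fintype.card L * Fintype.card V := by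
  rw [← Fintype.card_of_bijective hIw.bijective, Fintype.card_prod, Fintype.card_prod, mul_assoc]

end Iwahori

section ParahoricRestriction

variable {W : Type*} [AddCommGroup W] [Module ℂ W] {π : Representation ℂ G W}
  {U L V : Subgroup G} [Fintype U] [Fintype V]

theorem rep_mul_avgMap_mul_avgMap_comm (hIw : IwahoriDecomp ⊤ U L V) {l : G} (hl : l ∈ L) :
    π l * (avgMap π U * avgMap π V) = avgMap π U * avgMap π V * π l := by
  rw [← mul_assoc, rep_mul_avgMap_comm π (hIw.1 hl), mul_assoc, rep_mul_avgMap_comm π (hIw.2.1 hl),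
    mul_assoc]

theorem stable_parRes (hIw : IwahoriDecomp ⊤ U L V) : Stable (resRep π L) (parRes π U V) := by
  rintro ⟨l, hl⟩ _ ⟨y, rfl⟩
  exact ⟨π l y, congrArg (· y) (rep_mul_avgMap_mul_avgMap_comm hIw hl).symm⟩

theorem rep_apply_of_mem_parRes {u : G} (hu : u ∈ U) {x : W} (hx : x ∈ parRes π U V) :
    π u x = x := by
  obtain ⟨y, rfl⟩ := hx
  exact congrArg (· (avgMap π V y)) (rep_mul_avgMap π hu)

theorem avgMap_apply_of_mem_parRes {x : W} (hx : x ∈ parRes π U V) : avgMap π U x = x := by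
  obtain ⟨y, rfl⟩ := hx
  exact congrArg (· (avgMap π V y)) (avgMap_mul_self π (H := U))

theorem parRes_le_map_of_stable (hIw : IwahoriDecomp ⊤ U L V) (hπ : IsIrreducible π)
    {T : Submodule ℂ W} (hTρ : T ≤ parRes π U V) (hT : Stable (resRep π L) T) (hT0 : T ≠ ⊥) :
    parRes π U V ≤ T.map (avgMap π U * avgMap π V) := by
  have hB : (T.map (avgMap π V)).comap (avgMap π V) = ⊤ := by
    refine hπ.eq_top_of_rep_mem hT0 fun g t ht => ?_
    obtain ⟨⟨u, l, v⟩, hg⟩ := hIw.bijective.2 g⁻¹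
    obtain rfl : g = (v : G)⁻¹ * (l : G)⁻¹ * (u : G)⁻¹ := by
      rw [← inv_inj, ← hg]
      group
    refine ⟨π (l : G)⁻¹ t, hT ⟨_, L.inv_mem l.2⟩ t ht, ?_⟩
    rw [map_mul, map_mul, Module.End.mul_apply, Module.End.mul_apply,
      rep_apply_of_mem_parRes (U.inv_mem u.2) (hTρ ht)]
    exact (LinearMap.congr_fun (avgMap_mul_rep π (V.inv_mem v.2)) _).symm
  rintro _ ⟨y, rfl⟩
  obtain ⟨t, ht, hty⟩ := (hB ▸ Submodule.mem_top : y ∈ (T.map (avgMap π V)).comap (avgMap π V))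
  exact ⟨t, ht, congrArg (avgMap π U) hty⟩

theorem avgMap_mul_conj_mul_avgMap (hIw : IwahoriDecomp ⊤ U L V) {u l v : G} (hu : u ∈ U)
    (hl : l ∈ L) (hv : v ∈ V) :
    avgMap π U * (π (u * l * v) * (avgMap π U * avgMap π V) * π (u * l * v)⁻¹) * avgMap π U =
      π l * (avgMap π U * π v * (avgMap π U * avgMap π V * avgMap π U)) * π l⁻¹ := by
  set A := avgMap π U
  set B := avgMap π V
  have hAl : A * π l = π l * A := (rep_mul_avgMap_comm π (hIw.1 hl)).symm
  have hlA : π l⁻¹ * A = A * π l⁻¹ := rep_mul_avgMap_comm π (inv_mem (hIw.1 hl))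
  simp only [map_mul, mul_inv_rev]
  calc A * (π u * π l * π v * (A * B) * (π v⁻¹ * (π l⁻¹ * π u⁻¹))) * A
      = (A * π u) * π l * π v * A * (B * π v⁻¹) * π l⁻¹ * (π u⁻¹ * A) := by noncomm_ring
    _ = A * π l * π v * A * B * (π l⁻¹ * A) := by
      rw [avgMap_mul_rep π hu, avgMap_mul_rep π (inv_mem hv), rep_mul_avgMap π (inv_mem hu)]
      noncomm_ring
    _ = π l * (A * π v * (A * B * A)) * π l⁻¹ := by
      rw [hlA, hAl]
      noncomm_ring

variable [Fintype G]

theorem avgMap_mul_sum_conj_mul_avgMap [Fintype L] (hIw : IwahoriDecomp ⊤ U L V) :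
    avgMap π U * (∑ g, π g * (avgMap π U * avgMap π V) * π g⁻¹) * avgMap π U =
      (Fintype.card G : ℂ) •
        ((avgMap π U * avgMap π V) ^ 2 * avgMap π U) := by
  have hterm (u : U) (l : L) :
      ∑ v : V, avgMap π U * (π (u * l * v) * (avgMap π U * avgMap π V) * π (u * l * v)⁻¹) *
        avgMap π U =
      (Fintype.card V : ℂ) • ((avgMap π U * avgMap π V) ^ 2 * avgMap π U) := by
    have hA : Commute (π l) (avgMap π U) := rep_mul_avgMap_comm π (hIw.1 l.2)
    have hB : Commute (π l) (avgMap π V) := rep_mul_avgMap_comm π (hIw.2.1 l.2)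
    rw [Finset.sum_congr rfl fun v _ => avgMap_mul_conj_mul_avgMap hIw u.2 l.2 v.2,
      ← Finset.sum_mul, ← Finset.mul_sum, ← Finset.sum_mul, ← Finset.mul_sum,
      sum_rep_eq_smul_avgMap, mul_smul_comm, smul_mul_assoc, mul_smul_comm, smul_mul_assoc]
    congr 1
    calc _ = π l * ((avgMap π U * avgMap π V) ^ 2 * avgMap π U) * π l⁻¹ := by
          noncomm_ring
      _ = _ := by
          rw [(((hA.mul_right hB).pow_right 2).mul_right hA).eq, mul_assoc,
            ← map_mul, mul_inv_cancel, map_one, mul_one]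
  rw [Finset.mul_sum, Finset.sum_mul, hIw.sum_eq]
  simp only [hterm, Finset.sum_const, Finset.card_univ, ← Nat.cast_smul_eq_nsmul ℂ, smul_smul]
  rw [hIw.card_eq]
  push_cast
  ring_nf

variable [FiniteDimensional ℂ W]

theorem isIrreducibleSub_parRes (hIw : IwahoriDecomp ⊤ U L V) (hπ : IsIrreducible π)
    (hne : parRes π U V ≠ ⊥) : IsIrreducibleSub (resRep π L) (parRes π U V) := by
  refine ⟨hne, fun T hTρ hT => or_iff_not_imp_left.mpr fun hT0 => ?_⟩
  exact Submodule.eq_of_le_of_finrank_le hTρ <|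
    (Submodule.finrank_mono (parRes_le_map_of_stable hIw hπ hTρ hT hT0)).trans
      (Submodule.finrank_map_le _ _)

theorem exists_avgMap_mul_avgMap_apply_eq_smul (hIw : IwahoriDecomp ⊤ U L V)
    (hπ : IsIrreducible π) (hne : parRes π U V ≠ ⊥) :
    ∃ c : ℂ, c ≠ 0 ∧ ∀ x ∈ parRes π U V, (avgMap π U * avgMap π V) x = c • x := by
  obtain ⟨c, hc⟩ := (isIrreducibleSub_parRes hIw hπ hne).exists_eq_smul (stable_parRes hIw)
    (avgMap π U * avgMap π V) (fun x _ => ⟨x, rfl⟩)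
    fun l => rep_mul_avgMap_mul_avgMap_comm hIw l.2
  refine ⟨c, fun hc0 => hne (eq_bot_iff.mpr fun x hx => ?_), hc⟩
  obtain ⟨y, hy, rfl⟩ := parRes_le_map_of_stable hIw hπ le_rfl (stable_parRes hIw) hne hx
  simp [hc y hy, hc0]

theorem sq_avgMap_mul_avgMap_mul_avgMap [Fintype L]
    (hIw : IwahoriDecomp ⊤ U L V) (hπ : IsIrreducible π) :
    (avgMap π U * avgMap π V) ^ 2 * avgMap π U =
      (LinearMap.trace ℂ W (avgMap π U * avgMap π V) / Module.finrank ℂ W) • avgMap π U := by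
  have h := avgMap_mul_sum_conj_mul_avgMap (π := π) hIw
  rw [hπ.sum_conj_eq_smul_one, mul_smul_comm, smul_mul_assoc, mul_one, avgMap_mul_self,
    mul_div_assoc, ← smul_smul] at h
  exact (smul_right_injective _ (Nat.cast_ne_zero.mpr Fintype.card_ne_zero)).eq_iff.mp h.symm

theorem avgMap_mul_avgMap_apply_of_mem_parRes (hIw : IwahoriDecomp ⊤ U L V)
    (hπ : IsIrreducible π) (hne : parRes π U V ≠ ⊥) {x : W} (hx : x ∈ parRes π U V) :
    (avgMap π U * avgMap π V) x =
      ((Module.finrank ℂ (parRes π U V) : ℂ) / Module.finrank ℂ W) • x := by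
  have : Fintype L := Fintype.ofFinite L
  obtain ⟨c, hc0, hc⟩ := exists_avgMap_mul_avgMap_apply_eq_smul hIw hπ hne
  have htrace : LinearMap.trace ℂ W (avgMap π U * avgMap π V) =
      c * Module.finrank ℂ (parRes π U V) := by
    have hmem (y : W) : (avgMap π U * avgMap π V) y ∈ parRes π U V := ⟨y, rfl⟩
    have hres : (avgMap π U * avgMap π V).restrict (fun y _ => hmem y) = c • LinearMap.id := by
      ext y
      simpa using hc y y.2
    rw [← LinearMap.trace_restrict_eq_of_forall_mem _ _ hmem, hres, map_smul,
      LinearMap.trace_id, smul_eq_mul]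
  have hsq : c * c = LinearMap.trace ℂ W (avgMap π U * avgMap π V) / Module.finrank ℂ W := by
    obtain ⟨y, hy, hy0⟩ := (Submodule.ne_bot_iff _).mp hne
    have hcy : avgMap π U (avgMap π V y) = c • y := hc y hy
    have h := LinearMap.congr_fun (sq_avgMap_mul_avgMap_mul_avgMap hIw hπ) y
    simp only [sq, Module.End.mul_apply, LinearMap.smul_apply, avgMap_apply_of_mem_parRes hy] at h
    rw [hcy, map_smul, map_smul, hcy, smul_smul] at h
    exact smul_left_injective ℂ hy0 h
  rw [htrace, mul_div_assoc] at hsq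
  rw [← mul_left_cancel₀ hc0 hsq]
  exact hc x hx

end ParahoricRestriction

variable {J : Type*} [Group J] [Fintype J]

/-- Let `J = ULV` be a finite group with an Iwahori decomposition and `π` an irreducible
finite-dimensional `ℂ[J]`-module with character `χ_π`.  If `r_{U,V}π = 0` then
`|U|⁻¹|V|⁻¹ ∑_{u∈U} ∑_{v∈V} χ_π(u·l·v) = 0` for every `l ∈ L`.  Otherwise
`ρ := r_{U,V}π` is an irreducible `ℂ[L]`-module and
`|U|⁻¹|V|⁻¹ ∑_{u∈U} ∑_{v∈V} χ_π(u·l·v) = (dim ρ / dim π) · χ_ρ(l)` for every `l ∈ L`. -/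
theorem parRes_character_formula
    (U L V : Subgroup J) (hIw : IwahoriDecomp (⊤ : Subgroup J) U L V)
    [Fintype ↥U] [Fintype ↥V]
    {W : Type*} [AddCommGroup W] [Module ℂ W] [FiniteDimensional ℂ W]
    (π : Representation ℂ J W) (hπ : IsIrreducible π) :
    (parRes π U V = ⊥ →
      ∀ l ∈ L, (Fintype.card ↥U : ℂ)⁻¹ * (Fintype.card ↥V : ℂ)⁻¹ *
        ∑ u : ↥U, ∑ v : ↥V, LinearMap.trace ℂ W (π ((u : J) * l * (v : J))) = 0) ∧
    (parRes π U V ≠ ⊥ →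
      IsIrreducibleSub (resRep π L) (parRes π U V) ∧
      ∀ l ∈ L, ∀ hl : ∀ x ∈ parRes π U V, π l x ∈ parRes π U V,
        (Fintype.card ↥U : ℂ)⁻¹ * (Fintype.card ↥V : ℂ)⁻¹ *
          ∑ u : ↥U, ∑ v : ↥V, LinearMap.trace ℂ W (π ((u : J) * l * (v : J))) =
        ((Module.finrank ℂ ↥(parRes π U V) : ℂ) / (Module.finrank ℂ W : ℂ)) *
          LinearMap.trace ℂ ↥(parRes π U V) ((π l).restrict hl)) := by
  have hchar : ∀ l ∈ L, (Fintype.card U : ℂ)⁻¹ * (Fintype.card V : ℂ)⁻¹ *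
      ∑ u : U, ∑ v : V, LinearMap.trace ℂ W (π (u * l * v)) =
        LinearMap.trace ℂ W (π l * (avgMap π U * avgMap π V)) := fun l hl => by
    rw [← trace_avgMap_mul_rep_mul_avgMap, ← rep_mul_avgMap_comm π (hIw.1 hl), mul_assoc]
  refine ⟨fun h0 l hl => ?_, fun hne => ⟨isIrreducibleSub_parRes hIw hπ hne, fun l hl hl' => ?_⟩⟩
  · rw [hchar l hl, show avgMap π U * avgMap π V = 0 from LinearMap.range_eq_bot.mp h0, mul_zero,
      map_zero]
  · have hmem (x : W) : (π l * (avgMap π U * avgMap π V)) x ∈ parRes π U V := hl' _ ⟨x, rfl⟩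
    have hres : (π l * (avgMap π U * avgMap π V)).restrict (fun x _ => hmem x) =
        ((Module.finrank ℂ (parRes π U V) : ℂ) / Module.finrank ℂ W) • (π l).restrict hl' := by
      ext x
      simp [avgMap_mul_avgMap_apply_of_mem_parRes hIw hπ hne x.2]
    rw [hchar l hl, ← LinearMap.trace_restrict_eq_of_forall_mem _ _ hmem, hres, map_smul,
      smul_eq_mul]

end Parahoric
end
end
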